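/- arXiv:1208.6475 — 5 statements merged into one kernel-verified Lean document; each statement's English description precedes it below -/
import Mathlib

section
/- Exponential L² decay of the target system (Proposition 3.1, decay part): For every λ > 0 there exists c > 0 such that every classical C¹ solution γ of the target system satisfies ‖γ(·,t)‖_{L²} ≤ c e^{−λ t} ‖γ(·,0)‖_{L²} for all t ≥ 0. -/
/-!
Put `A = (1 + q²)⁻¹`, `μ = 2λ / min ε`, `ρ₁ = -A e^{-μx}`, `ρ₂ = e^{μx}` and `wᵢ = |ρᵢ| / εᵢ`.
The equations say `wᵢ ∂ₜ = ρᵢ ∂ₓ` on each component, so for the weighted energy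
`V = ∫₀¹ (w₁ α² + w₂ β²)` (`targetEnergy`), differentiating under the integral and integrating
by parts gives `V' = [ρ₁ α² + ρ₂ β²]₀¹ - ∫₀¹ (ρ₁' α² + ρ₂' β²)`. The boundary conditions and
`A q² ≤ 1` make the boundary term nonpositive, and `ρᵢ' = μ |ρᵢ| = μ εᵢ wᵢ ≥ 2λ wᵢ`, so
`V' ≤ -2λ V`. Grönwall gives `V(t) ≤ e^{-2λt} V(0)`, and `V` is comparable to the squared
L² norm.
-/

open MeasureTheory Set Function Filter Topology

theorem IsCompact.exists_pos_forall_le {X : Type*} [TopologicalSpace X] {s : Set X} {f : X → ℝ}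
    (hs : IsCompact s) (hf : ContinuousOn f s) (hpos : ∀ x ∈ s, 0 < f x) :
    ∃ m > 0, ∀ x ∈ s, m ≤ f x := by
  rcases s.eq_empty_or_nonempty with rfl | hne
  · exact ⟨1, one_pos, fun x hx => hx.elim⟩
  obtain ⟨x₀, hx₀, hmin⟩ := hs.exists_isMinOn hne hf
  exact ⟨f x₀, hpos x₀ hx₀, fun x hx => hmin hx⟩

theorem ContDiffOn.continuousOn_uncurry_of_hasDerivWithinAt_fst {f g : ℝ → ℝ → ℝ}
    {s t : Set ℝ} (hf : ContDiffOn ℝ 1 (uncurry f) (s ×ˢ t)) (hs : UniqueDiffOn ℝ s)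
    (ht : UniqueDiffOn ℝ t) (hg : ∀ x ∈ s, ∀ y ∈ t, HasDerivWithinAt (f · y) (g x y) s x) :
    ContinuousOn (uncurry g) (s ×ˢ t) := by
  set L := fderivWithin ℝ (uncurry f) (s ×ˢ t)
  refine ((hf.continuousOn_fderivWithin (hs.prod ht) le_rfl).clm_apply
    (continuousOn_const (c := ((1 : ℝ), (0 : ℝ))))).congr fun p hp => ?_
  obtain ⟨hx, hy⟩ := hp
  have hline : HasDerivWithinAt (fun x : ℝ => (x, p.2)) ((1 : ℝ), (0 : ℝ)) s p.1 :=
    ((hasDerivAt_id p.1).prodMk (hasDerivAt_const p.1 p.2)).hasDerivWithinAt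
  have hslice : HasDerivWithinAt (uncurry f ∘ fun x => (x, p.2)) (L p (1, 0)) s p.1 :=
    ((hf.differentiableOn one_ne_zero) p ⟨hx, hy⟩).hasFDerivWithinAt.comp_hasDerivWithinAt
      p.1 hline fun x hx' => mk_mem_prod hx' hy
  exact (hs _ hx).eq_deriv _ (hg p.1 hx p.2 hy) hslice

theorem continuousOn_intervalIntegral_of_continuousOn_uncurry {F : ℝ → ℝ → ℝ} {a b : ℝ}
    {T : Set ℝ} (hab : a ≤ b) (hT : IsCompact T)
    (hF : ContinuousOn (uncurry F) (Icc a b ×ˢ T)) :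
    ContinuousOn (fun σ => ∫ x in a..b, F x σ) T := by
  obtain ⟨C, hC⟩ := (isCompact_Icc.prod hT).exists_bound_of_continuousOn hF
  have hIoc : uIoc a b ⊆ Icc a b := by rw [uIoc_of_le hab]; exact Ioc_subset_Icc_self
  intro τ hτ
  refine intervalIntegral.continuousWithinAt_of_dominated_interval (bound := fun _ => C)
    (eventually_nhdsWithin_of_forall fun σ hσ => ?_)
    (eventually_nhdsWithin_of_forall fun σ hσ =>
      ae_of_all _ fun x hx => hC (x, σ) ⟨hIoc hx, hσ⟩)
    intervalIntegrable_const (ae_of_all _ fun x hx => hF.uncurry_left x (hIoc hx) τ hτ)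
  exact ((hF.uncurry_right σ hσ).aestronglyMeasurable measurableSet_Icc).mono_set hIoc

theorem hasDerivAt_intervalIntegral_of_continuousOn_uncurry {F F' : ℝ → ℝ → ℝ} {a b τ : ℝ}
    {T : Set ℝ} (hab : a ≤ b) (hT : IsCompact T) (hτ : T ∈ 𝓝 τ)
    (hF : ContinuousOn (uncurry F) (Icc a b ×ˢ T))
    (hF' : ContinuousOn (uncurry F') (Icc a b ×ˢ T))
    (hderiv : ∀ x ∈ Icc a b, ∀ σ ∈ T, HasDerivAt (F x) (F' x σ) σ) :
    HasDerivAt (fun σ => ∫ x in a..b, F x σ) (∫ x in a..b, F' x τ) τ := by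
  obtain ⟨C, hC⟩ := (isCompact_Icc.prod hT).exists_bound_of_continuousOn hF'
  have hIoc : uIoc a b ⊆ Icc a b := by rw [uIoc_of_le hab]; exact Ioc_subset_Icc_self
  have hmeas : ∀ {G : ℝ → ℝ → ℝ}, ContinuousOn (uncurry G) (Icc a b ×ˢ T) → ∀ σ ∈ T,
      AEStronglyMeasurable (fun x => G x σ) (volume.restrict (uIoc a b)) := fun hG σ hσ =>
    ((hG.uncurry_right σ hσ).aestronglyMeasurable measurableSet_Icc).mono_set hIoc
  have hτT := mem_of_mem_nhds hτ
  exact (intervalIntegral.hasDerivAt_integral_of_dominated_loc_of_deriv_le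
    (F := fun σ x => F x σ) (F' := fun σ x => F' x σ) (bound := fun _ => C) hτ
    (eventually_of_mem hτ (hmeas hF)) ((hF.uncurry_right τ hτT).intervalIntegrable_of_Icc hab)
    (hmeas hF' τ hτT) (ae_of_all _ fun x hx σ hσ => hC (x, σ) ⟨hIoc hx, hσ⟩)
    intervalIntegrable_const (ae_of_all _ fun x hx σ hσ => hderiv x (hIoc hx) σ hσ)).2

theorem le_exp_neg_mul_of_hasDerivAt_le {E E' : ℝ → ℝ} {k a b : ℝ} (hab : a ≤ b)
    (hE : ContinuousOn E (Icc a b)) (hE' : ∀ τ ∈ Ioo a b, HasDerivAt E (E' τ) τ)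
    (hle : ∀ τ ∈ Ioo a b, E' τ ≤ -k * E τ) :
    E b ≤ Real.exp (-k * (b - a)) * E a := by
  have hanti : AntitoneOn (fun τ => Real.exp (k * τ) * E τ) (Icc a b) := by
    refine antitoneOn_of_hasDerivWithinAt_nonpos (convex_Icc a b)
      (f' := fun τ => Real.exp (k * τ) * k * E τ + Real.exp (k * τ) * E' τ)
      ((Real.continuous_exp.comp (continuous_const_mul k)).continuousOn.mul hE)
      (fun τ hτ => ?_) fun τ hτ => ?_
    · rw [interior_Icc] at hτ
      have := (((hasDerivAt_id' τ).const_mul k).exp.fun_mul (hE' τ hτ)).hasDerivWithinAt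
        (s := interior (Icc a b))
      simpa [mul_comm k, mul_assoc] using this
    · rw [interior_Icc] at hτ
      have := hle τ hτ
      have := Real.exp_pos (k * τ)
      nlinarith
  have h := hanti (left_mem_Icc.2 hab) (right_mem_Icc.2 hab) hab
  rw [show -k * (b - a) = k * a - k * b by ring, Real.exp_sub, div_mul_eq_mul_div,
    le_div_iff₀ (Real.exp_pos _)]
  simpa [mul_comm] using h

theorem sqrt_le_sqrt_div_mul_exp_mul_sqrt {c C N N₀ E E₀ k t : ℝ} (hc : 0 < c) (hC : 0 ≤ C)
    (hlow : c * N ≤ E) (hdecay : E ≤ Real.exp (-(2 * k) * t) * E₀) (hup : E₀ ≤ C * N₀) :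
    Real.sqrt N ≤ Real.sqrt (C / c) * Real.exp (-k * t) * Real.sqrt N₀ := by
  have hexp : Real.exp (-(2 * k) * t) = Real.exp (-k * t) ^ 2 := by
    rw [← Real.exp_nat_mul]; ring_nf
  have hN : c * N ≤ c * (C / c * Real.exp (-k * t) ^ 2 * N₀) := by
    calc c * N ≤ Real.exp (-(2 * k) * t) * E₀ := hlow.trans hdecay
      _ ≤ Real.exp (-(2 * k) * t) * (C * N₀) := by gcongr
      _ = c * (C / c * Real.exp (-k * t) ^ 2 * N₀) := by rw [hexp]; field_simp
  calc Real.sqrt N ≤ Real.sqrt (C / c * Real.exp (-k * t) ^ 2 * N₀) :=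
        Real.sqrt_le_sqrt (le_of_mul_le_mul_left hN hc)
    _ = Real.sqrt (C / c) * Real.exp (-k * t) * Real.sqrt N₀ := by
        rw [Real.sqrt_mul (by positivity), Real.sqrt_mul (by positivity),
          Real.sqrt_sq (Real.exp_nonneg _)]

theorem ContinuousOn.uncurry_weight_mul_sq {s T : Set ℝ} {w : ℝ → ℝ} {u : ℝ → ℝ → ℝ}
    (hw : ContinuousOn w s) (hu : ContinuousOn (uncurry u) (s ×ˢ T)) :
    ContinuousOn (uncurry fun x t => w x * u x t ^ 2) (s ×ˢ T) :=
  (hw.comp continuousOn_fst fun _ hp => hp.1).mul (hu.pow 2)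

theorem hasDerivAt_integral_weight_mul_sq {a b τ : ℝ} {w ρ ρ' : ℝ → ℝ} {u ux ut : ℝ → ℝ → ℝ}
    (hab : a < b) (hτ : 0 < τ) (hu : ContDiffOn ℝ 1 (uncurry u) (Icc a b ×ˢ Ici 0))
    (hux : ∀ x ∈ Icc a b, ∀ t ∈ Ici (0 : ℝ), HasDerivWithinAt (u · t) (ux x t) (Icc a b) x)
    (hut : ∀ x ∈ Icc a b, ∀ t ∈ Ici (0 : ℝ), HasDerivWithinAt (u x) (ut x t) (Ici 0) t)
    (hflux : ∀ x ∈ Icc a b, ∀ t ∈ Ici (0 : ℝ), w x * ut x t = ρ x * ux x t)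
    (hw : ContinuousOn w (Icc a b)) (hρ : ∀ x ∈ Icc a b, HasDerivWithinAt ρ (ρ' x) (Icc a b) x)
    (hρ' : ContinuousOn ρ' (Icc a b)) :
    HasDerivAt (fun t => ∫ x in a..b, w x * u x t ^ 2)
      (ρ b * u b τ ^ 2 - ρ a * u a τ ^ 2 - ∫ x in a..b, ρ' x * u x τ ^ 2) τ := by
  set T := Icc (τ / 2) (2 * τ)
  have hT : T ⊆ Ici 0 := fun σ hσ => le_trans (by positivity) hσ.1
  have hux_cont : ContinuousOn (uncurry ux) (Icc a b ×ˢ Ici 0) :=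
    hu.continuousOn_uncurry_of_hasDerivWithinAt_fst (uniqueDiffOn_Icc hab) (uniqueDiffOn_Ici 0)
      hux
  have hρ_cont : ContinuousOn ρ (Icc a b) := fun x hx => (hρ x hx).continuousWithinAt
  have hfst : MapsTo Prod.fst (Icc a b ×ˢ T) (Icc a b) := fun p hp => hp.1
  have hrect : Icc a b ×ˢ T ⊆ Icc a b ×ˢ Ici 0 := prod_mono subset_rfl hT
  have hF := hw.uncurry_weight_mul_sq (hu.continuousOn.mono hrect)
  have hF' : ContinuousOn (uncurry fun x t => ρ x * (2 * u x t * ux x t)) (Icc a b ×ˢ T) :=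
    (hρ_cont.comp continuousOn_fst hfst).mul
      ((continuousOn_const.mul (hu.continuousOn.mono hrect)).mul (hux_cont.mono hrect))
  have hderiv := hasDerivAt_intervalIntegral_of_continuousOn_uncurry hab.le isCompact_Icc
    (Icc_mem_nhds (show τ / 2 < τ by linarith) (show τ < 2 * τ by linarith)) hF hF'
    fun x hx σ hσ => by
      have hσ0 : Ici (0 : ℝ) ∈ 𝓝 σ := Ici_mem_nhds (by linarith [hσ.1])
      refine ((((hut x hx σ (hT hσ)).hasDerivAt hσ0).fun_pow 2).const_mul (w x)).congr_deriv ?_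
      norm_num
      linear_combination (2 * u x σ) * hflux x hx σ (hT hσ)
  have hslice : ∀ x ∈ uIcc a b,
      HasDerivWithinAt (fun y => u y τ ^ 2) (2 * u x τ * ux x τ) (uIcc a b) x := by
    intro x hx
    rw [uIcc_of_le hab.le] at hx ⊢
    simpa using (hux x hx τ hτ.le).fun_pow 2
  rwa [intervalIntegral.integral_mul_deriv_eq_deriv_mul_of_hasDerivWithinAt (u := ρ) (u' := ρ')
    (v := fun x => u x τ ^ 2) (by rwa [uIcc_of_le hab.le]) hslice
    (hρ'.intervalIntegrable_of_Icc hab.le)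
    (((continuousOn_const.mul (hu.continuousOn.uncurry_right τ hτ.le)).mul
      (hux_cont.uncurry_right τ hτ.le)).intervalIntegrable_of_Icc hab.le)] at hderiv

theorem mul_integral_div_mul_sq_le {a b m : ℝ} {ρ ε u : ℝ → ℝ} (hab : a ≤ b) (hm : 0 < m)
    (hρ : ContinuousOn ρ (Icc a b)) (hρ₀ : ∀ x ∈ Icc a b, 0 ≤ ρ x)
    (hε : ContinuousOn ε (Icc a b)) (hmε : ∀ x ∈ Icc a b, m ≤ ε x) (hu : ContinuousOn u (Icc a b)) :
    m * ∫ x in a..b, ρ x / ε x * u x ^ 2 ≤ ∫ x in a..b, ρ x * u x ^ 2 := by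
  have hε₀ : ∀ x ∈ Icc a b, 0 < ε x := fun x hx => hm.trans_le (hmε x hx)
  have hε₀' : ∀ x ∈ Icc a b, ε x ≠ 0 := fun x hx => (hε₀ x hx).ne'
  rw [← intervalIntegral.integral_const_mul]
  refine intervalIntegral.integral_mono_on hab
    (ContinuousOn.intervalIntegrable_of_Icc hab (by fun_prop (disch := assumption)))
    ((hρ.mul (hu.pow 2)).intervalIntegrable_of_Icc hab) fun x hx => ?_
  calc m * (ρ x / ε x * u x ^ 2) = ρ x * u x ^ 2 * (m / ε x) := by ring
    _ ≤ ρ x * u x ^ 2 * 1 :=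
      mul_le_mul_of_nonneg_left ((div_le_one (hε₀ x hx)).2 (hmε x hx))
        (mul_nonneg (hρ₀ x hx) (sq_nonneg _))
    _ = ρ x * u x ^ 2 := mul_one _

noncomputable def targetEnergy (ε₁ ε₂ : ℝ → ℝ) (A μ : ℝ) (α β : ℝ → ℝ → ℝ) (t : ℝ) : ℝ :=
  (∫ x in (0 : ℝ)..1, A * Real.exp (-μ * x) / ε₁ x * α x t ^ 2) +
    ∫ x in (0 : ℝ)..1, Real.exp (μ * x) / ε₂ x * β x t ^ 2

/-- The left-hand side is the derivative given by `hasDerivAt_integral_weight_mul_sq` for the two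
components, with `ρ₁ = -A e^{-μx}` and `ρ₂ = e^{μx}`. -/
theorem targetEnergy_dissipation {ε₁ ε₂ : ℝ → ℝ} {q A μ m τ : ℝ} {α β : ℝ → ℝ → ℝ}
    (hmε : ∀ x ∈ Icc (0 : ℝ) 1, m ≤ ε₁ x ∧ m ≤ ε₂ x) (hm : 0 < m) (hA : 0 ≤ A)
    (hAq : A * q ^ 2 ≤ 1) (hμ : 0 ≤ μ) (hε₁ : ContinuousOn ε₁ (Icc 0 1))
    (hε₂ : ContinuousOn ε₂ (Icc 0 1)) (hα : ContinuousOn (α · τ) (Icc 0 1))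
    (hβ : ContinuousOn (β · τ) (Icc 0 1)) (hbc₀ : α 0 τ = q * β 0 τ) (hbc₁ : β 1 τ = 0) :
    (-(A * Real.exp (-μ * 1)) * α 1 τ ^ 2 - -(A * Real.exp (-μ * 0)) * α 0 τ ^ 2 -
        ∫ x in (0 : ℝ)..1, μ * (A * Real.exp (-μ * x)) * α x τ ^ 2) +
      (Real.exp (μ * 1) * β 1 τ ^ 2 - Real.exp (μ * 0) * β 0 τ ^ 2 -
        ∫ x in (0 : ℝ)..1, μ * Real.exp (μ * x) * β x τ ^ 2) ≤
      -(μ * m) * targetEnergy ε₁ ε₂ A μ α β τ := by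
  have hboundary : -(A * Real.exp (-μ * 1)) * α 1 τ ^ 2 - -(A * Real.exp (-μ * 0)) * α 0 τ ^ 2 +
      (Real.exp (μ * 1) * β 1 τ ^ 2 - Real.exp (μ * 0) * β 0 τ ^ 2) ≤ 0 := by
    have := Real.exp_pos (-μ * 1)
    simp only [mul_zero, Real.exp_zero, hbc₀, hbc₁]
    nlinarith [sq_nonneg (α 1 τ), sq_nonneg (β 0 τ), mul_nonneg hA this.le]
  have hinterior₁ := mul_integral_div_mul_sq_le zero_le_one hm (by fun_prop)
    (fun x _ => by positivity) hε₁ (fun x hx => (hmε x hx).1) hα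
    (ρ := fun x => A * Real.exp (-μ * x))
  have hinterior₂ := mul_integral_div_mul_sq_le zero_le_one hm (by fun_prop)
    (fun x _ => by positivity) hε₂ (fun x hx => (hmε x hx).2) hβ (ρ := fun x => Real.exp (μ * x))
  simp only [mul_assoc μ, intervalIntegral.integral_const_mul, targetEnergy]
  nlinarith [mul_le_mul_of_nonneg_left hinterior₁ hμ, mul_le_mul_of_nonneg_left hinterior₂ hμ]

theorem targetEnergy_le_exp_mul {ε₁ ε₂ : ℝ → ℝ} {q A μ m t : ℝ} {α β αx βx αt βt : ℝ → ℝ → ℝ}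
    (hε₁ : ContinuousOn ε₁ (Icc 0 1)) (hε₂ : ContinuousOn ε₂ (Icc 0 1)) (hm : 0 < m)
    (hmε : ∀ x ∈ Icc (0 : ℝ) 1, m ≤ ε₁ x ∧ m ≤ ε₂ x) (hA : 0 ≤ A) (hAq : A * q ^ 2 ≤ 1)
    (hμ : 0 ≤ μ) (hα : ContDiffOn ℝ 1 (uncurry α) (Icc 0 1 ×ˢ Ici 0))
    (hβ : ContDiffOn ℝ 1 (uncurry β) (Icc 0 1 ×ˢ Ici 0))
    (hderiv : ∀ x ∈ Icc (0 : ℝ) 1, ∀ t ∈ Ici (0 : ℝ),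
      HasDerivWithinAt (fun s => α s t) (αx x t) (Icc 0 1) x ∧
      HasDerivWithinAt (fun s => β s t) (βx x t) (Icc 0 1) x ∧
      HasDerivWithinAt (fun τ => α x τ) (αt x t) (Ici 0) t ∧
      HasDerivWithinAt (fun τ => β x τ) (βt x t) (Ici 0) t)
    (hpde : ∀ x ∈ Icc (0 : ℝ) 1, ∀ t ∈ Ici (0 : ℝ),
      αt x t = -ε₁ x * αx x t ∧ βt x t = ε₂ x * βx x t)
    (hbc : ∀ t ∈ Ici (0 : ℝ), α 0 t = q * β 0 t ∧ β 1 t = 0) (ht : 0 ≤ t) :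
    targetEnergy ε₁ ε₂ A μ α β t ≤
      Real.exp (-(μ * m) * t) * targetEnergy ε₁ ε₂ A μ α β 0 := by
  have hε₁0 : ∀ x ∈ Icc (0 : ℝ) 1, ε₁ x ≠ 0 := fun x hx => (hm.trans_le (hmε x hx).1).ne'
  have hε₂0 : ∀ x ∈ Icc (0 : ℝ) 1, ε₂ x ≠ 0 := fun x hx => (hm.trans_le (hmε x hx).2).ne'
  have hw₁ : ContinuousOn (fun x => A * Real.exp (-μ * x) / ε₁ x) (Icc 0 1) := by
    fun_prop (disch := assumption)
  have hw₂ : ContinuousOn (fun x => Real.exp (μ * x) / ε₂ x) (Icc 0 1) := by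
    fun_prop (disch := assumption)
  have hρ₁ : ∀ x ∈ Icc (0 : ℝ) 1, HasDerivWithinAt (fun x => -(A * Real.exp (-μ * x)))
      (μ * (A * Real.exp (-μ * x))) (Icc 0 1) x := fun x _ => by
    refine (((hasDerivAt_id' x).const_mul (-μ)).exp.const_mul A).neg.hasDerivWithinAt
      |>.congr_deriv ?_
    ring
  have hρ₂ : ∀ x ∈ Icc (0 : ℝ) 1, HasDerivWithinAt (fun x => Real.exp (μ * x))
      (μ * Real.exp (μ * x)) (Icc 0 1) x := fun x _ => by
    refine ((hasDerivAt_id' x).const_mul μ).exp.hasDerivWithinAt.congr_deriv ?_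
    ring
  have hE : ∀ τ ∈ Ioo 0 t, HasDerivAt (targetEnergy ε₁ ε₂ A μ α β) _ τ := fun τ hτ =>
    (hasDerivAt_integral_weight_mul_sq zero_lt_one hτ.1 hα
      (fun x hx s hs => (hderiv x hx s hs).1)
      (fun x hx s hs => (hderiv x hx s hs).2.2.1)
      (fun x hx s hs => by rw [(hpde x hx s hs).1]; field_simp [hε₁0 x hx])
      hw₁ hρ₁ (by fun_prop)).add
    (hasDerivAt_integral_weight_mul_sq zero_lt_one hτ.1 hβ
      (fun x hx s hs => (hderiv x hx s hs).2.1)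
      (fun x hx s hs => (hderiv x hx s hs).2.2.2)
      (fun x hx s hs => by rw [(hpde x hx s hs).2]; field_simp [hε₂0 x hx])
      hw₂ hρ₂ (by fun_prop))
  have hrect : Icc (0 : ℝ) 1 ×ˢ Icc 0 t ⊆ Icc 0 1 ×ˢ Ici 0 :=
    prod_mono subset_rfl Icc_subset_Ici_self
  have hcont : ContinuousOn (targetEnergy ε₁ ε₂ A μ α β) (Icc 0 t) :=
    .fun_add (continuousOn_intervalIntegral_of_continuousOn_uncurry zero_le_one isCompact_Icc
        (hw₁.uncurry_weight_mul_sq (hα.continuousOn.mono hrect)))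
      (continuousOn_intervalIntegral_of_continuousOn_uncurry zero_le_one isCompact_Icc
        (hw₂.uncurry_weight_mul_sq (hβ.continuousOn.mono hrect)))
  simpa using le_exp_neg_mul_of_hasDerivAt_le ht hcont hE fun τ hτ =>
    targetEnergy_dissipation hmε hm hA hAq hμ hε₁ hε₂ (hα.continuousOn.uncurry_right τ hτ.1.le)
      (hβ.continuousOn.uncurry_right τ hτ.1.le) (hbc τ hτ.1.le).1 (hbc τ hτ.1.le).2

theorem targetEnergy_bounds {ε₁ ε₂ : ℝ → ℝ} {A μ m M t : ℝ} {α β : ℝ → ℝ → ℝ}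
    (hε₁ : ContinuousOn ε₁ (Icc 0 1)) (hε₂ : ContinuousOn ε₂ (Icc 0 1)) (hm : 0 < m)
    (hmε : ∀ x ∈ Icc (0 : ℝ) 1, m ≤ ε₁ x ∧ m ≤ ε₂ x)
    (hεM : ∀ x ∈ Icc (0 : ℝ) 1, ε₁ x ≤ M ∧ ε₂ x ≤ M) (hA : 0 < A) (hA₁ : A ≤ 1) (hμ : 0 ≤ μ)
    (hα : ContinuousOn (α · t) (Icc 0 1)) (hβ : ContinuousOn (β · t) (Icc 0 1)) :
    A * Real.exp (-μ) / M * ∫ x in (0 : ℝ)..1, (α x t ^ 2 + β x t ^ 2) ≤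
        targetEnergy ε₁ ε₂ A μ α β t ∧
      targetEnergy ε₁ ε₂ A μ α β t ≤
        Real.exp μ / m * ∫ x in (0 : ℝ)..1, (α x t ^ 2 + β x t ^ 2) := by
  have hε₁0 : ∀ x ∈ Icc (0 : ℝ) 1, 0 < ε₁ x := fun x hx => hm.trans_le (hmε x hx).1
  have hε₂0 : ∀ x ∈ Icc (0 : ℝ) 1, 0 < ε₂ x := fun x hx => hm.trans_le (hmε x hx).2
  have hε₁0' : ∀ x ∈ Icc (0 : ℝ) 1, ε₁ x ≠ 0 := fun x hx => (hε₁0 x hx).ne'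
  have hε₂0' : ∀ x ∈ Icc (0 : ℝ) 1, ε₂ x ≠ 0 := fun x hx => (hε₂0 x hx).ne'
  have hint₁ : IntervalIntegrable (fun x => A * Real.exp (-μ * x) / ε₁ x * α x t ^ 2) volume 0 1 :=
    ContinuousOn.intervalIntegrable_of_Icc zero_le_one (by fun_prop (disch := assumption))
  have hint₂ : IntervalIntegrable (fun x => Real.exp (μ * x) / ε₂ x * β x t ^ 2) volume 0 1 :=
    ContinuousOn.intervalIntegrable_of_Icc zero_le_one (by fun_prop (disch := assumption))
  have hintN : ∀ c : ℝ, IntervalIntegrable (fun x => c * (α x t ^ 2 + β x t ^ 2)) volume 0 1 :=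
    fun c => ContinuousOn.intervalIntegrable_of_Icc zero_le_one (by fun_prop)
  rw [targetEnergy, ← intervalIntegral.integral_add hint₁ hint₂,
    ← intervalIntegral.integral_const_mul, ← intervalIntegral.integral_const_mul]
  constructor
  · refine intervalIntegral.integral_mono_on zero_le_one (hintN _) (hint₁.add hint₂) fun x hx => ?_
    have hlow₁ : A * Real.exp (-μ) / M ≤ A * Real.exp (-μ * x) / ε₁ x :=
      div_le_div₀ (by positivity) (by gcongr; nlinarith [hx.2]) (hε₁0 x hx) (hεM x hx).1
    have hlow₂ : A * Real.exp (-μ) / M ≤ Real.exp (μ * x) / ε₂ x := by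
      refine div_le_div₀ (by positivity) ?_ (hε₂0 x hx) (hεM x hx).2
      calc A * Real.exp (-μ) ≤ 1 * 1 :=
            mul_le_mul hA₁ (Real.exp_le_one_iff.2 (by linarith)) (by positivity) zero_le_one
        _ ≤ Real.exp (μ * x) := by rw [mul_one]; exact Real.one_le_exp (by nlinarith [hx.1])
    rw [mul_add]
    exact add_le_add (mul_le_mul_of_nonneg_right hlow₁ (sq_nonneg _))
      (mul_le_mul_of_nonneg_right hlow₂ (sq_nonneg _))
  · refine intervalIntegral.integral_mono_on zero_le_one (hint₁.add hint₂) (hintN _) fun x hx => ?_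
    have hup₁ : A * Real.exp (-μ * x) / ε₁ x ≤ Real.exp μ / m := by
      refine div_le_div₀ (by positivity) ?_ hm (hmε x hx).1
      calc A * Real.exp (-μ * x) ≤ 1 * 1 :=
            mul_le_mul hA₁ (Real.exp_le_one_iff.2 (by nlinarith [hx.1])) (by positivity) zero_le_one
        _ ≤ Real.exp μ := by rw [mul_one]; exact Real.one_le_exp hμ
    have hup₂ : Real.exp (μ * x) / ε₂ x ≤ Real.exp μ / m :=
      div_le_div₀ (by positivity) (by gcongr; nlinarith [hx.2]) hm (hmε x hx).2
    rw [mul_add]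
    exact add_le_add (mul_le_mul_of_nonneg_right hup₁ (sq_nonneg _))
      (mul_le_mul_of_nonneg_right hup₂ (sq_nonneg _))

/-- Exponential L² decay of the target system (Proposition 3.1, decay part). -/
theorem target_system_L2_exponential_decay
    (ε₁ ε₂ : ℝ → ℝ) (q : ℝ)
    (hε₁ : ContDiffOn ℝ 1 ε₁ (Icc 0 1)) (hε₂ : ContDiffOn ℝ 1 ε₂ (Icc 0 1))
    (hε₁pos : ∀ x ∈ Icc (0:ℝ) 1, 0 < ε₁ x) (hε₂pos : ∀ x ∈ Icc (0:ℝ) 1, 0 < ε₂ x) :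
    ∀ lam > (0:ℝ), ∃ c > (0:ℝ),
      ∀ (α β αx βx αt βt : ℝ → ℝ → ℝ),
        ContDiffOn ℝ 1 (Function.uncurry α) (Icc 0 1 ×ˢ Ici 0) →
        ContDiffOn ℝ 1 (Function.uncurry β) (Icc 0 1 ×ˢ Ici 0) →
        (∀ x ∈ Icc (0:ℝ) 1, ∀ t ∈ Ici (0:ℝ),
          HasDerivWithinAt (fun s => α s t) (αx x t) (Icc 0 1) x ∧
          HasDerivWithinAt (fun s => β s t) (βx x t) (Icc 0 1) x ∧
          HasDerivWithinAt (fun τ => α x τ) (αt x t) (Ici 0) t ∧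
          HasDerivWithinAt (fun τ => β x τ) (βt x t) (Ici 0) t) →
        -- the target system γ_t = Σ(x) γ_x with Σ = diag(-ε₁, ε₂)
        (∀ x ∈ Icc (0:ℝ) 1, ∀ t ∈ Ici (0:ℝ),
          αt x t = -ε₁ x * αx x t ∧ βt x t = ε₂ x * βx x t) →
        -- boundary conditions
        (∀ t ∈ Ici (0:ℝ), α 0 t = q * β 0 t ∧ β 1 t = 0) →
        ∀ t ∈ Ici (0:ℝ),
          Real.sqrt (∫ ξ in (0:ℝ)..1, ((α ξ t) ^ 2 + (β ξ t) ^ 2)) ≤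
            c * Real.exp (-lam * t) *
              Real.sqrt (∫ ξ in (0:ℝ)..1, ((α ξ 0) ^ 2 + (β ξ 0) ^ 2)) := by
  intro lam hlam
  obtain ⟨m, hm, hmε⟩ := isCompact_Icc.exists_pos_forall_le
    (hε₁.continuousOn.inf hε₂.continuousOn) fun x hx => lt_min (hε₁pos x hx) (hε₂pos x hx)
  obtain ⟨M, hMε⟩ := isCompact_Icc.exists_bound_of_continuousOn
    (hε₁.continuousOn.sup hε₂.continuousOn)
  replace hmε : ∀ x ∈ Icc (0 : ℝ) 1, m ≤ ε₁ x ∧ m ≤ ε₂ x := fun x hx => le_inf_iff.1 (hmε x hx)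
  replace hMε : ∀ x ∈ Icc (0 : ℝ) 1, ε₁ x ≤ M ∧ ε₂ x ≤ M := fun x hx =>
    sup_le_iff.1 ((Real.le_norm_self _).trans (hMε x hx))
  have hM : 0 < M := hm.trans_le ((hmε 0 (left_mem_Icc.2 zero_le_one)).1.trans
    (hMε 0 (left_mem_Icc.2 zero_le_one)).1)
  set μ := 2 * lam / m
  set A := (1 + q ^ 2)⁻¹
  have hA : 0 < A := by positivity
  have hA₁ : A ≤ 1 := inv_le_one_of_one_le₀ (by nlinarith [sq_nonneg q])
  have hAq : A * q ^ 2 ≤ 1 := by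
    rw [inv_mul_le_one₀ (by positivity)]; linarith
  refine ⟨Real.sqrt (Real.exp μ / m / (A * Real.exp (-μ) / M)), by positivity,
    fun α β αx βx αt βt hα hβ hderiv hpde hbc t ht => ?_⟩
  have hdecay := targetEnergy_le_exp_mul (μ := μ) hε₁.continuousOn hε₂.continuousOn hm hmε hA.le hAq
    (by positivity) hα hβ hderiv hpde hbc ht
  rw [show μ * m = 2 * lam from div_mul_cancel₀ _ hm.ne'] at hdecay
  have hbounds := fun τ (hτ : τ ∈ Ici (0 : ℝ)) => targetEnergy_bounds (μ := μ) hε₁.continuousOn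
    hε₂.continuousOn hm hmε hMε hA hA₁ (by positivity) (hα.continuousOn.uncurry_right τ hτ)
    (hβ.continuousOn.uncurry_right τ hτ)
  exact sqrt_le_sqrt_div_mul_exp_mul_sqrt (by positivity) (by positivity)
    (hbounds t ht).1 hdecay (hbounds 0 self_mem_Ici).2
end

section
/- Finite-time extinction of the target system (Proposition 3.1, finite-time part): Every classical C¹ solution γ of the target system satisfies γ(x,t) = 0 for all x ∈ [0,1] and all t ≥ t_F, where t_F = ∫₀¹ (1/ε₁(ξ) + 1/ε₂(ξ)) dξ. -/
open MeasureTheory Set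

/-!
Both components are constant along characteristics. Since `β_t = ε₂ β_x` with `ε₂ > 0`,
the value `β(x, t)` is carried from the right end, `β(x, t) = β(1, t - ∫ₓ¹ 1/ε₂)`, and
`β(1, ·) = 0`; hence `β` vanishes for `t ≥ ∫₀¹ 1/ε₂`. From then on `α(0, t) = q β(0, t) = 0`,
and `α`, which is carried from the left end at speed `ε₁`, vanishes after a further time
`∫₀¹ 1/ε₁`.
-/

theorem ContinuousOn.hasDerivWithinAt_integral_Icc {E : Type*} [NormedAddCommGroup E]
    [NormedSpace ℝ E] [CompleteSpace E] {f : ℝ → E} {a b x y : ℝ}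
    (hf : ContinuousOn f (Icc a b)) (hx : x ∈ Icc a b) (hy : y ∈ Icc a b) :
    HasDerivWithinAt (fun z => ∫ s in x..z, f s) (f y) (Icc a b) y :=
  have : Fact (y ∈ Icc a b) := ⟨hy⟩
  intervalIntegral.integral_hasDerivWithinAt_right
    ((hf.mono (uIcc_subset_Icc hx hy)).intervalIntegrable)
    (hf.stronglyMeasurableAtFilter_nhdsWithin measurableSet_Icc y) (hf y hy)

theorem Convex.is_const_of_hasDerivWithinAt_zero {E : Type*} [NormedAddCommGroup E]
    [NormedSpace ℝ E] {f : ℝ → E} {r : Set ℝ} (hr : Convex ℝ r)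
    (hf : ∀ x ∈ r, HasDerivWithinAt f 0 r x) {a b : ℝ} (ha : a ∈ r) (hb : b ∈ r) :
    f b = f a := by
  have := hr.norm_image_sub_le_of_norm_hasDerivWithin_le hf (fun _ _ => (norm_zero).le) ha hb
  rw [zero_mul, norm_le_zero_iff, sub_eq_zero] at this
  exact this

theorem DifferentiableWithinAt.hasDerivWithinAt_comp_graph {u : ℝ → ℝ → ℝ} {s t r : Set ℝ}
    {φ : ℝ → ℝ} {x a b φ' : ℝ}
    (hu : DifferentiableWithinAt ℝ (Function.uncurry u) (s ×ˢ t) (x, φ x))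
    (hxs : x ∈ s) (hφt : φ x ∈ t)
    (hs : UniqueDiffWithinAt ℝ s x) (ht : UniqueDiffWithinAt ℝ t (φ x))
    (hux : HasDerivWithinAt (fun z => u z (φ x)) a s x)
    (hut : HasDerivWithinAt (u x) b t (φ x))
    (hφ : HasDerivWithinAt φ φ' r x) (hmaps : MapsTo (fun y => (y, φ y)) r (s ×ˢ t)) :
    HasDerivWithinAt (fun y => u y (φ y)) (a + φ' * b) r x := by
  set L := fderivWithin ℝ (Function.uncurry u) (s ×ˢ t) (x, φ x)
  have hL : HasFDerivWithinAt (Function.uncurry u) L (s ×ˢ t) (x, φ x) := hu.hasFDerivWithinAt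
  have hLx : HasDerivWithinAt (fun z => u z (φ x)) (L (1, 0)) s x :=
    (hL.comp_hasDerivWithinAt x ((hasDerivWithinAt_id x s).prodMk
      (hasDerivWithinAt_const x s (φ x))) fun z hz => mk_mem_prod hz hφt :)
  have hLt : HasDerivWithinAt (u x) (L (0, 1)) t (φ x) :=
    (hL.comp_hasDerivWithinAt (φ x) ((hasDerivWithinAt_const (φ x) t x).prodMk
      (hasDerivWithinAt_id (φ x) t)) fun z hz => mk_mem_prod hxs hz :)
  have hdir : ((1 : ℝ), φ') = ((1 : ℝ), (0 : ℝ)) + φ' • ((0 : ℝ), (1 : ℝ)) := by simp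
  have h := hL.comp_hasDerivWithinAt x ((hasDerivWithinAt_id x r).prodMk hφ) hmaps
  rwa [hdir, map_add, map_smul, hs.eq_deriv _ hLx hux, ht.eq_deriv _ hLt hut, smul_eq_mul] at h

theorem eq_along_characteristic {u ux ut : ℝ → ℝ → ℝ} {c φ φ' : ℝ → ℝ} {s t r : Set ℝ}
    (hu : DifferentiableOn ℝ (Function.uncurry u) (s ×ˢ t))
    (hs : UniqueDiffOn ℝ s) (ht : UniqueDiffOn ℝ t)
    (hux : ∀ x ∈ s, ∀ y ∈ t, HasDerivWithinAt (fun z => u z y) (ux x y) s x)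
    (hut : ∀ x ∈ s, ∀ y ∈ t, HasDerivWithinAt (u x) (ut x y) t y)
    (hpde : ∀ x ∈ s, ∀ y ∈ t, ut x y = c x * ux x y)
    (hr : Convex ℝ r) (hmaps : MapsTo (fun y => (y, φ y)) r (s ×ˢ t))
    (hφ : ∀ x ∈ r, HasDerivWithinAt φ (φ' x) r x) (hφc : ∀ x ∈ r, φ' x * c x = -1)
    {a b : ℝ} (ha : a ∈ r) (hb : b ∈ r) : u b (φ b) = u a (φ a) := by
  refine hr.is_const_of_hasDerivWithinAt_zero (f := fun y => u y (φ y))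
    (fun x hx => ?_) ha hb
  obtain ⟨hxs, hφt⟩ := hmaps hx
  have h := (hu _ (hmaps hx)).hasDerivWithinAt_comp_graph hxs hφt (hs x hxs) (ht _ hφt)
    (hux x hxs _ hφt) (hut x hxs _ hφt) (hφ x hx) hmaps
  have hzero : ux x (φ x) + φ' x * ut x (φ x) = 0 := by
    linear_combination ux x (φ x) * hφc x hx + φ' x * hpde x hxs _ hφt
  rwa [hzero] at h

theorem integral_le_of_subinterval {g : ℝ → ℝ} {a b x y : ℝ} (hg : ContinuousOn g (Icc a b))
    (hg₀ : ∀ ξ ∈ Icc a b, 0 ≤ g ξ) (hax : a ≤ x) (hxy : x ≤ y) (hyb : y ≤ b) :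
    ∫ ξ in x..y, g ξ ≤ ∫ ξ in a..b, g ξ :=
  intervalIntegral.integral_mono_interval hax hxy hyb
    (ae_restrict_of_forall_mem measurableSet_Ioc fun ξ hξ => hg₀ ξ (Ioc_subset_Icc_self hξ))
    (hg.intervalIntegrable_of_Icc (hax.trans (hxy.trans hyb)))

section Transport

variable {u ux ut : ℝ → ℝ → ℝ} {ε : ℝ → ℝ} {a b t₀ : ℝ}

theorem eq_zero_of_leftward_transport (hab : a < b)
    (hu : DifferentiableOn ℝ (Function.uncurry u) (Icc a b ×ˢ Ici 0))
    (hux : ∀ x ∈ Icc a b, ∀ t ∈ Ici (0:ℝ),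
      HasDerivWithinAt (fun z => u z t) (ux x t) (Icc a b) x)
    (hut : ∀ x ∈ Icc a b, ∀ t ∈ Ici (0:ℝ), HasDerivWithinAt (u x) (ut x t) (Ici 0) t)
    (hpde : ∀ x ∈ Icc a b, ∀ t ∈ Ici (0:ℝ), ut x t = ε x * ux x t)
    (hε : ContinuousOn ε (Icc a b)) (hεpos : ∀ x ∈ Icc a b, 0 < ε x)
    (ht₀ : 0 ≤ t₀) (hbd : ∀ t, t₀ ≤ t → u b t = 0) :
    ∀ x ∈ Icc a b, ∀ t, t₀ + ∫ ξ in a..b, 1 / ε ξ ≤ t → u x t = 0 := by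
  intro x hx t ht
  have hg : ContinuousOn (fun ξ => 1 / ε ξ) (Icc a b) :=
    continuousOn_const.div hε fun ξ hξ => (hεpos ξ hξ).ne'
  set φ : ℝ → ℝ := fun y => t - ∫ ξ in x..y, 1 / ε ξ
  have hφ_ge : ∀ y ∈ Icc x b, t₀ ≤ φ y := fun y hy => by
    have := integral_le_of_subinterval hg (fun ξ hξ => (one_div_pos.2 (hεpos ξ hξ)).le)
      hx.1 hy.1 hy.2
    linarith
  have hsub : Icc x b ⊆ Icc a b := Icc_subset_Icc_left hx.1
  have hconst := eq_along_characteristic (r := Icc x b) (φ' := fun y => -(1 / ε y)) hu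
    (uniqueDiffOn_Icc hab) (uniqueDiffOn_Ici 0) hux hut hpde (convex_Icc x b)
    (fun y hy => ⟨hsub hy, ht₀.trans (hφ_ge y hy)⟩)
    (fun y hy => ((hg.hasDerivWithinAt_integral_Icc hx (hsub hy)).mono hsub).const_sub t)
    (fun y hy => by field_simp [(hεpos y (hsub hy)).ne'])
    (left_mem_Icc.2 hx.2) (right_mem_Icc.2 hx.2)
  calc u x t = u x (φ x) := by simp [φ]
    _ = u b (φ b) := hconst.symm
    _ = 0 := hbd _ (hφ_ge b (right_mem_Icc.2 hx.2))

theorem eq_zero_of_rightward_transport (hab : a < b)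
    (hu : DifferentiableOn ℝ (Function.uncurry u) (Icc a b ×ˢ Ici 0))
    (hux : ∀ x ∈ Icc a b, ∀ t ∈ Ici (0:ℝ),
      HasDerivWithinAt (fun z => u z t) (ux x t) (Icc a b) x)
    (hut : ∀ x ∈ Icc a b, ∀ t ∈ Ici (0:ℝ), HasDerivWithinAt (u x) (ut x t) (Ici 0) t)
    (hpde : ∀ x ∈ Icc a b, ∀ t ∈ Ici (0:ℝ), ut x t = -ε x * ux x t)
    (hε : ContinuousOn ε (Icc a b)) (hεpos : ∀ x ∈ Icc a b, 0 < ε x)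
    (ht₀ : 0 ≤ t₀) (hbd : ∀ t, t₀ ≤ t → u a t = 0) :
    ∀ x ∈ Icc a b, ∀ t, t₀ + ∫ ξ in a..b, 1 / ε ξ ≤ t → u x t = 0 := by
  intro x hx t ht
  have hg : ContinuousOn (fun ξ => 1 / ε ξ) (Icc a b) :=
    continuousOn_const.div hε fun ξ hξ => (hεpos ξ hξ).ne'
  set φ : ℝ → ℝ := fun y => t + ∫ ξ in x..y, 1 / ε ξ
  have hφ_ge : ∀ y ∈ Icc a x, t₀ ≤ φ y := fun y hy => by
    have := integral_le_of_subinterval hg (fun ξ hξ => (one_div_pos.2 (hεpos ξ hξ)).le)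
      hy.1 hy.2 hx.2
    simp only [φ, intervalIntegral.integral_symm y x]
    linarith
  have hsub : Icc a x ⊆ Icc a b := Icc_subset_Icc_right hx.2
  have hconst := eq_along_characteristic (r := Icc a x) (φ' := fun y => 1 / ε y) hu
    (uniqueDiffOn_Icc hab) (uniqueDiffOn_Ici 0) hux hut hpde (convex_Icc a x)
    (fun y hy => ⟨hsub hy, ht₀.trans (hφ_ge y hy)⟩)
    (fun y hy => ((hg.hasDerivWithinAt_integral_Icc hx (hsub hy)).mono hsub).const_add t)
    (fun y hy => by field_simp [(hεpos y (hsub hy)).ne'])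
    (left_mem_Icc.2 hx.1) (right_mem_Icc.2 hx.1)
  calc u x t = u x (φ x) := by simp [φ]
    _ = u a (φ a) := hconst
    _ = 0 := hbd _ (hφ_ge a (left_mem_Icc.2 hx.1))

end Transport

/-- Finite-time extinction of the target system (Proposition 3.1, finite-time part). -/
theorem target_system_finite_time_extinction
    (ε₁ ε₂ : ℝ → ℝ) (q : ℝ)
    (hε₁ : ContDiffOn ℝ 1 ε₁ (Icc 0 1)) (hε₂ : ContDiffOn ℝ 1 ε₂ (Icc 0 1))
    (hε₁pos : ∀ x ∈ Icc (0:ℝ) 1, 0 < ε₁ x) (hε₂pos : ∀ x ∈ Icc (0:ℝ) 1, 0 < ε₂ x)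
    (α β αx βx αt βt : ℝ → ℝ → ℝ)
    (hα : ContDiffOn ℝ 1 (Function.uncurry α) (Icc 0 1 ×ˢ Ici 0))
    (hβ : ContDiffOn ℝ 1 (Function.uncurry β) (Icc 0 1 ×ˢ Ici 0))
    (hderiv : ∀ x ∈ Icc (0:ℝ) 1, ∀ t ∈ Ici (0:ℝ),
      HasDerivWithinAt (fun s => α s t) (αx x t) (Icc 0 1) x ∧
      HasDerivWithinAt (fun s => β s t) (βx x t) (Icc 0 1) x ∧
      HasDerivWithinAt (fun τ => α x τ) (αt x t) (Ici 0) t ∧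
      HasDerivWithinAt (fun τ => β x τ) (βt x t) (Ici 0) t)
    -- the target system γ_t = Σ(x) γ_x with Σ = diag(-ε₁, ε₂)
    (hpde : ∀ x ∈ Icc (0:ℝ) 1, ∀ t ∈ Ici (0:ℝ),
      αt x t = -ε₁ x * αx x t ∧ βt x t = ε₂ x * βx x t)
    -- boundary conditions
    (hbc : ∀ t ∈ Ici (0:ℝ), α 0 t = q * β 0 t ∧ β 1 t = 0) :
    ∀ x ∈ Icc (0:ℝ) 1, ∀ t : ℝ,
      (∫ ξ in (0:ℝ)..1, (1 / ε₁ ξ + 1 / ε₂ ξ)) ≤ t →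
      α x t = 0 ∧ β x t = 0 := by
  intro x hx t ht
  have hβ_zero := eq_zero_of_leftward_transport zero_lt_one (hβ.differentiableOn one_ne_zero)
    (fun x hx t ht => (hderiv x hx t ht).2.1) (fun x hx t ht => (hderiv x hx t ht).2.2.2)
    (fun x hx t ht => (hpde x hx t ht).2) hε₂.continuousOn hε₂pos le_rfl
    (fun t ht => (hbc t ht).2)
  have hT₁ : 0 ≤ ∫ ξ in (0:ℝ)..1, 1 / ε₁ ξ := intervalIntegral.integral_nonneg zero_le_one
    fun ξ hξ => (one_div_pos.2 (hε₁pos ξ hξ)).le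
  have hT₂ : 0 ≤ ∫ ξ in (0:ℝ)..1, 1 / ε₂ ξ := intervalIntegral.integral_nonneg zero_le_one
    fun ξ hξ => (one_div_pos.2 (hε₂pos ξ hξ)).le
  have hα_zero := eq_zero_of_rightward_transport zero_lt_one (hα.differentiableOn one_ne_zero)
    (fun x hx t ht => (hderiv x hx t ht).1) (fun x hx t ht => (hderiv x hx t ht).2.2.1)
    (fun x hx t ht => (hpde x hx t ht).1) hε₁.continuousOn hε₁pos hT₂
    (fun t ht => by
      rw [(hbc t (hT₂.trans ht)).1, hβ_zero 0 (left_mem_Icc.2 zero_le_one) t (by linarith),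
        mul_zero])
  have hg₁ : ContinuousOn (fun ξ => 1 / ε₁ ξ) (Icc 0 1) :=
    continuousOn_const.div hε₁.continuousOn fun ξ hξ => (hε₁pos ξ hξ).ne'
  have hg₂ : ContinuousOn (fun ξ => 1 / ε₂ ξ) (Icc 0 1) :=
    continuousOn_const.div hε₂.continuousOn fun ξ hξ => (hε₂pos ξ hξ).ne'
  have hsplit : ∫ ξ in (0:ℝ)..1, (1 / ε₁ ξ + 1 / ε₂ ξ) =
      (∫ ξ in (0:ℝ)..1, 1 / ε₁ ξ) + ∫ ξ in (0:ℝ)..1, 1 / ε₂ ξ :=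
    intervalIntegral.integral_add (hg₁.intervalIntegrable_of_Icc zero_le_one)
      (hg₂.intervalIntegrable_of_Icc zero_le_one)
  exact ⟨hα_zero x hx t (by linarith), hβ_zero x hx t (by linarith)⟩
end

section
/- Characteristic curves remain in the triangle (unnamed lemma in Appendix A, case i = 2): Let (x,ξ) ∈ T, set z := φ₃⁻¹(φ₁(x) + φ₂(ξ)) and s₂^F := φ₁(x) − φ₁(z), and for s ∈ [0, s₂^F] set x₂(s) := φ₁⁻¹(φ₁(z) + s) and ξ₂(s) := φ₂⁻¹(φ₂(z) − s). Then s₂^F ≥ 0 and for every s ∈ [0, s₂^F] one has 0 ≤ ξ₂(s) ≤ x₂(s) ≤ x and ξ₂(s) ≥ ξ; in particular (x₂(s), ξ₂(s)) ∈ T. -/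
/-!
Since `ε₁, ε₂ > 0`, the maps `φ₁, φ₂` are strictly increasing on `[0,1]`. The point `z` is
characterised by `φ₁ z + φ₂ z = φ₁ x + φ₂ ξ`, which forces `ξ ≤ z ≤ x`; in particular
`s₂^F = φ₁ x - φ₁ z = φ₂ z - φ₂ ξ ≥ 0`. For `s ∈ [0, s₂^F]` the value `φ₁ (x₂ s) = φ₁ z + s` lies in
`[φ₁ z, φ₁ x]` and `φ₂ (ξ₂ s) = φ₂ z - s` lies in `[φ₂ ξ, φ₂ z]`, so by monotonicity
`z ≤ x₂ s ≤ x` and `ξ ≤ ξ₂ s ≤ z`.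
-/

open MeasureTheory Set

/-- `φ(ε)(x) = ∫₀ˣ dz/ε(z)`. -/
noncomputable def phiInt (ε : ℝ → ℝ) (x : ℝ) : ℝ := ∫ z in (0:ℝ)..x, 1 / ε z

lemma le_and_le_of_add_eq_add {α β : Type*} [LinearOrder α] [AddCommMonoid β] [LinearOrder β]
    [IsOrderedCancelAddMonoid β] {s : Set α} {f g : α → β}
    (hf : StrictMonoOn f s) (hg : StrictMonoOn g s) {x ξ z : α}
    (hx : x ∈ s) (hξ : ξ ∈ s) (hz : z ∈ s) (hξx : ξ ≤ x) (h : f z + g z = f x + g ξ) :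
    ξ ≤ z ∧ z ≤ x := by
  constructor
  · by_contra! hzξ
    have : f z + g z < f x + g ξ :=
      add_lt_add_of_le_of_lt (hf.monotoneOn hz hx (hzξ.le.trans hξx)) (hg hz hξ hzξ)
    exact this.ne h
  · by_contra! hxz
    have : f x + g ξ < f z + g z :=
      add_lt_add_of_lt_of_le (hf hx hz hxz) (hg.monotoneOn hξ hz (hξx.trans hxz.le))
    exact this.ne' h

section phiInt

variable {ε : ℝ → ℝ} (hε : ContinuousOn ε (Icc 0 1)) (hpos : ∀ x ∈ Icc (0:ℝ) 1, 0 < ε x)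
include hε hpos

lemma phiInt_strictMonoOn : StrictMonoOn (phiInt ε) (Icc 0 1) := by
  have hint : ∀ {u v : ℝ}, u ∈ Icc (0:ℝ) 1 → v ∈ Icc (0:ℝ) 1 →
      IntervalIntegrable (fun z => 1 / ε z) volume u v := fun hu hv =>
    (continuousOn_const.div hε fun z hz => (hpos z hz).ne').mono (uIcc_subset_Icc hu hv)
      |>.intervalIntegrable
  intro a ha b hb hab
  have hdiff : phiInt ε b - phiInt ε a = ∫ z in a..b, 1 / ε z :=
    intervalIntegral.integral_interval_sub_left (hint (left_mem_Icc.2 zero_le_one) hb)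
      (hint (left_mem_Icc.2 zero_le_one) ha)
  have hpos_int : 0 < ∫ z in a..b, 1 / ε z :=
    intervalIntegral.intervalIntegral_pos_of_pos_on (hint ha hb)
      (fun z hz => one_div_pos.2 (hpos z ⟨ha.1.trans hz.1.le, hz.2.le.trans hb.2⟩)) hab
  linarith

lemma phiInt_mem_Icc {x : ℝ} (hx : x ∈ Icc (0:ℝ) 1) : phiInt ε x ∈ Icc 0 (phiInt ε 1) := by
  have hmono := (phiInt_strictMonoOn hε hpos).monotoneOn
  have h0 : phiInt ε 0 = 0 := intervalIntegral.integral_same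
  exact ⟨h0 ▸ hmono (left_mem_Icc.2 zero_le_one) hx hx.1,
    hmono hx (right_mem_Icc.2 zero_le_one) hx.2⟩

lemma inv_phiInt_mem_Icc {ψ : ℝ → ℝ}
    (hψ : ∀ t ∈ Icc (0:ℝ) (phiInt ε 1), ψ t ∈ Icc (0:ℝ) 1 ∧ phiInt ε (ψ t) = t)
    {lo hi t : ℝ} (hlo : lo ∈ Icc (0:ℝ) 1) (hhi : hi ∈ Icc (0:ℝ) 1)
    (ht : t ∈ Icc (phiInt ε lo) (phiInt ε hi)) : ψ t ∈ Icc lo hi := by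
  have hmono := phiInt_strictMonoOn hε hpos
  obtain ⟨hψt, hφψ⟩ := hψ t
    ⟨(phiInt_mem_Icc hε hpos hlo).1.trans ht.1, ht.2.trans (phiInt_mem_Icc hε hpos hhi).2⟩
  rw [← hφψ] at ht
  exact ⟨(hmono.le_iff_le hlo hψt).1 ht.1, (hmono.le_iff_le hψt hhi).1 ht.2⟩

end phiInt

theorem characteristic_curve_in_triangle_case2_general
    (ε₁ ε₂ : ℝ → ℝ)
    (hε₁ : ContinuousOn ε₁ (Icc 0 1)) (hε₂ : ContinuousOn ε₂ (Icc 0 1))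
    (hε₁pos : ∀ x ∈ Icc (0:ℝ) 1, 0 < ε₁ x) (hε₂pos : ∀ x ∈ Icc (0:ℝ) 1, 0 < ε₂ x)
    (ψ₁ ψ₂ ψ₃ : ℝ → ℝ)
    (hψ₁' : ∀ s ∈ Icc (0:ℝ) (phiInt ε₁ 1), ψ₁ s ∈ Icc (0:ℝ) 1 ∧ phiInt ε₁ (ψ₁ s) = s)
    (hψ₂' : ∀ s ∈ Icc (0:ℝ) (phiInt ε₂ 1), ψ₂ s ∈ Icc (0:ℝ) 1 ∧ phiInt ε₂ (ψ₂ s) = s)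
    (hψ₃' : ∀ s ∈ Icc (0:ℝ) (phiInt ε₁ 1 + phiInt ε₂ 1),
      ψ₃ s ∈ Icc (0:ℝ) 1 ∧ phiInt ε₁ (ψ₃ s) + phiInt ε₂ (ψ₃ s) = s)
    (x ξ : ℝ) (hξ0 : 0 ≤ ξ) (hξx : ξ ≤ x) (hx1 : x ≤ 1) :
    0 ≤ phiInt ε₁ x - phiInt ε₁ (ψ₃ (phiInt ε₁ x + phiInt ε₂ ξ)) ∧
    ∀ s : ℝ, 0 ≤ s →
      s ≤ phiInt ε₁ x - phiInt ε₁ (ψ₃ (phiInt ε₁ x + phiInt ε₂ ξ)) →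
      0 ≤ ψ₂ (phiInt ε₂ (ψ₃ (phiInt ε₁ x + phiInt ε₂ ξ)) - s) ∧
      ψ₂ (phiInt ε₂ (ψ₃ (phiInt ε₁ x + phiInt ε₂ ξ)) - s) ≤
        ψ₁ (phiInt ε₁ (ψ₃ (phiInt ε₁ x + phiInt ε₂ ξ)) + s) ∧
      ψ₁ (phiInt ε₁ (ψ₃ (phiInt ε₁ x + phiInt ε₂ ξ)) + s) ≤ x ∧
      ξ ≤ ψ₂ (phiInt ε₂ (ψ₃ (phiInt ε₁ x + phiInt ε₂ ξ)) - s) := by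
  have hxI : x ∈ Icc (0:ℝ) 1 := ⟨hξ0.trans hξx, hx1⟩
  have hξI : ξ ∈ Icc (0:ℝ) 1 := ⟨hξ0, hξx.trans hx1⟩
  have hφ₁x := phiInt_mem_Icc hε₁ hε₁pos hxI
  have hφ₂ξ := phiInt_mem_Icc hε₂ hε₂pos hξI
  obtain ⟨hzI, hz⟩ := hψ₃' _ ⟨add_nonneg hφ₁x.1 hφ₂ξ.1, add_le_add hφ₁x.2 hφ₂ξ.2⟩
  set z := ψ₃ (phiInt ε₁ x + phiInt ε₂ ξ)
  obtain ⟨hξz, hzx⟩ := le_and_le_of_add_eq_add (phiInt_strictMonoOn hε₁ hε₁pos)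
    (phiInt_strictMonoOn hε₂ hε₂pos) hxI hξI hzI hξx hz
  have hφ₂ξz := (phiInt_strictMonoOn hε₂ hε₂pos).monotoneOn hξI hzI hξz
  refine ⟨sub_nonneg.2 ((phiInt_strictMonoOn hε₁ hε₁pos).monotoneOn hzI hxI hzx),
    fun s hs0 hsF => ?_⟩
  have hx₂ := inv_phiInt_mem_Icc hε₁ hε₁pos hψ₁' hzI hxI
    (t := phiInt ε₁ z + s) ⟨by linarith, by linarith⟩
  have hξ₂ := inv_phiInt_mem_Icc hε₂ hε₂pos hψ₂' hξI hzI
    (t := phiInt ε₂ z - s) ⟨by linarith, by linarith⟩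
  exact ⟨hξ0.trans hξ₂.1, hξ₂.2.trans hx₂.1, hx₂.2, hξ₂.1⟩

/-- Characteristic curves remain in the triangle (unnamed lemma in Appendix A,
case i = 2).  `ψ₁, ψ₂, ψ₃` are the inverses of `φ₁, φ₂, φ₃ = φ₁ + φ₂`. -/
theorem characteristic_curve_in_triangle_case2
    (ε₁ ε₂ : ℝ → ℝ)
    (hε₁ : ContinuousOn ε₁ (Icc 0 1)) (hε₂ : ContinuousOn ε₂ (Icc 0 1))
    (hε₁pos : ∀ x ∈ Icc (0:ℝ) 1, 0 < ε₁ x) (hε₂pos : ∀ x ∈ Icc (0:ℝ) 1, 0 < ε₂ x)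
    (ψ₁ ψ₂ ψ₃ : ℝ → ℝ)
    (hψ₁ : ∀ x ∈ Icc (0:ℝ) 1, ψ₁ (phiInt ε₁ x) = x)
    (hψ₁' : ∀ s ∈ Icc (0:ℝ) (phiInt ε₁ 1), ψ₁ s ∈ Icc (0:ℝ) 1 ∧ phiInt ε₁ (ψ₁ s) = s)
    (hψ₂ : ∀ x ∈ Icc (0:ℝ) 1, ψ₂ (phiInt ε₂ x) = x)
    (hψ₂' : ∀ s ∈ Icc (0:ℝ) (phiInt ε₂ 1), ψ₂ s ∈ Icc (0:ℝ) 1 ∧ phiInt ε₂ (ψ₂ s) = s)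
    (hψ₃ : ∀ x ∈ Icc (0:ℝ) 1, ψ₃ (phiInt ε₁ x + phiInt ε₂ x) = x)
    (hψ₃' : ∀ s ∈ Icc (0:ℝ) (phiInt ε₁ 1 + phiInt ε₂ 1),
      ψ₃ s ∈ Icc (0:ℝ) 1 ∧ phiInt ε₁ (ψ₃ s) + phiInt ε₂ (ψ₃ s) = s)
    (x ξ : ℝ) (hξ0 : 0 ≤ ξ) (hξx : ξ ≤ x) (hx1 : x ≤ 1) :
    0 ≤ phiInt ε₁ x - phiInt ε₁ (ψ₃ (phiInt ε₁ x + phiInt ε₂ ξ)) ∧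
    ∀ s : ℝ, 0 ≤ s →
      s ≤ phiInt ε₁ x - phiInt ε₁ (ψ₃ (phiInt ε₁ x + phiInt ε₂ ξ)) →
      0 ≤ ψ₂ (phiInt ε₂ (ψ₃ (phiInt ε₁ x + phiInt ε₂ ξ)) - s) ∧
      ψ₂ (phiInt ε₂ (ψ₃ (phiInt ε₁ x + phiInt ε₂ ξ)) - s) ≤
        ψ₁ (phiInt ε₁ (ψ₃ (phiInt ε₁ x + phiInt ε₂ ξ)) + s) ∧
      ψ₁ (phiInt ε₁ (ψ₃ (phiInt ε₁ x + phiInt ε₂ ξ)) + s) ≤ x ∧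
      ξ ≤ ψ₂ (phiInt ε₂ (ψ₃ (phiInt ε₁ x + phiInt ε₂ ξ)) - s) :=
  characteristic_curve_in_triangle_case2_general ε₁ ε₂ hε₁ hε₂ hε₁pos hε₂pos ψ₁ ψ₂ ψ₃ hψ₁' hψ₂' hψ₃'
    x ξ hξ0 hξx hx1
end

section
/- Integral estimate along the first characteristic (Lemma A.3, case i = 1): For every integer n ≥ 1 and every (x,ξ) ∈ T, ∫₀^{φ₁(ξ)} [ φ₁⁻¹( φ₁(x) − φ₁(ξ) + s ) ]ⁿ ds ≤ K_ε x^{n+1}/(n+1), where K_ε := max_{x∈[0,1]} max{ 1/ε₁(x), 1/ε₂(x) }. -/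
/-!
Substituting `t = φ₁(x) − φ₁(ξ) + s` and using `ψ₁ ≥ 0` bounds the integral by
`∫₀^{φ₁(x)} ψ₁(t)ⁿ dt`. The change of variables `t = φ₁(u)`, `dt = du / ε₁(u)`, turns this into
`∫₀ˣ uⁿ / ε₁(u) du ≤ K_ε xⁿ⁺¹/(n+1)`. The integrability of `ψ₁ⁿ` needed for the first step comes
from its monotonicity, as the inverse of the strictly increasing `φ₁`.
-/

open MeasureTheory Set

theorem StrictMonoOn.monotoneOn_of_rightInvOn {α β : Type*} [LinearOrder α] [Preorder β]
    {f : α → β} {g : β → α} {s : Set α} {t : Set β} (hf : StrictMonoOn f s)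
    (hg : MapsTo g t s) (hfg : RightInvOn g f t) : MonotoneOn g t := by
  intro a ha b hb hab
  rw [← hf.le_iff_le (hg ha) (hg hb), hfg ha, hfg hb]
  exact hab

theorem ContinuousOn.le_iSup_Icc {f : ℝ → ℝ} {a b u : ℝ} (hf : ContinuousOn f (Icc a b))
    (hu : u ∈ Icc a b) : f u ≤ ⨆ y : Icc a b, f y :=
  le_ciSup (isCompact_range hf.domRestrict).bddAbove ⟨u, hu⟩

theorem ContinuousOn.one_div_of_pos {α : Type*} [TopologicalSpace α] {s : Set α} {ε : α → ℝ}
    (hε : ContinuousOn ε s)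
    (hpos : ∀ x ∈ s, 0 < ε x) : ContinuousOn (fun z => 1 / ε z) s :=
  continuousOn_const.div hε fun z hz => (hpos z hz).ne'

theorem integral_comp_add_left_le_of_nonneg {f : ℝ → ℝ} {a b : ℝ} (ha : 0 ≤ a) (hb : 0 ≤ b)
    (hf : ∀ t ∈ Ioc 0 (a + b), 0 ≤ f t) (hfi : IntervalIntegrable f volume 0 (a + b)) :
    ∫ s in (0:ℝ)..b, f (a + s) ≤ ∫ t in (0:ℝ)..a + b, f t := by
  rw [intervalIntegral.integral_comp_add_left, add_zero]
  exact intervalIntegral.integral_mono_interval ha (by linarith) le_rfl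
    (ae_restrict_of_forall_mem measurableSet_Ioc hf) hfi

theorem integral_mul_pow_le_of_le {f : ℝ → ℝ} {K x : ℝ} (hx : 0 ≤ x)
    (hf : ContinuousOn f (Icc 0 x)) (hfK : ∀ u ∈ Icc 0 x, f u ≤ K) (n : ℕ) :
    ∫ u in (0:ℝ)..x, f u * u ^ n ≤ K * x ^ (n + 1) / (n + 1) := calc
  ∫ u in (0:ℝ)..x, f u * u ^ n ≤ ∫ u in (0:ℝ)..x, K * u ^ n := by
    refine intervalIntegral.integral_mono_on hx ?_
      ((continuous_const.mul (continuous_pow n)).intervalIntegrable _ _) fun u hu =>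
        mul_le_mul_of_nonneg_right (hfK u hu) (pow_nonneg hu.1 n)
    exact (hf.mul (continuousOn_pow n)).intervalIntegrable_of_Icc hx
  _ = K * x ^ (n + 1) / (n + 1) := by
    rw [intervalIntegral.integral_const_mul, integral_pow, mul_div_assoc]
    simp

section phiInt

variable {ε : ℝ → ℝ}

@[simp]
theorem phiInt_zero : phiInt ε 0 = 0 := intervalIntegral.integral_same

theorem intervalIntegrable_one_div_of_pos (hε : ContinuousOn ε (Icc 0 1))
    (hpos : ∀ x ∈ Icc (0:ℝ) 1, 0 < ε x) {a b : ℝ} (ha : a ∈ Icc (0:ℝ) 1) (hb : b ∈ Icc (0:ℝ) 1) :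
    IntervalIntegrable (fun z => 1 / ε z) volume a b :=
  ((hε.one_div_of_pos hpos).mono (uIcc_subset_Icc ha hb)).intervalIntegrable

theorem strictMonoOn_phiInt (hε : ContinuousOn ε (Icc 0 1))
    (hpos : ∀ x ∈ Icc (0:ℝ) 1, 0 < ε x) : StrictMonoOn (phiInt ε) (Icc 0 1) := by
  intro a ha b hb hab
  have h0 : (0:ℝ) ∈ Icc (0:ℝ) 1 := left_mem_Icc.2 zero_le_one
  rw [← sub_pos, phiInt, phiInt, intervalIntegral.integral_interval_sub_left
    (intervalIntegrable_one_div_of_pos hε hpos h0 hb)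
    (intervalIntegrable_one_div_of_pos hε hpos h0 ha)]
  refine intervalIntegral.intervalIntegral_pos_of_pos_on
    (intervalIntegrable_one_div_of_pos hε hpos ha hb) (fun z hz => ?_) hab
  exact one_div_pos.2 (hpos z ⟨ha.1.trans hz.1.le, hz.2.le.trans hb.2⟩)

theorem phiInt_nonneg (hε : ContinuousOn ε (Icc 0 1)) (hpos : ∀ x ∈ Icc (0:ℝ) 1, 0 < ε x)
    {x : ℝ} (hx : x ∈ Icc (0:ℝ) 1) : 0 ≤ phiInt ε x := by
  simpa using (strictMonoOn_phiInt hε hpos).monotoneOn (left_mem_Icc.2 zero_le_one) hx hx.1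

theorem hasDerivWithinAt_phiInt (hε : ContinuousOn ε (Icc 0 1))
    (hpos : ∀ x ∈ Icc (0:ℝ) 1, 0 < ε x) {x : ℝ} (hx : x ∈ Icc (0:ℝ) 1) :
    HasDerivWithinAt (phiInt ε) (1 / ε x) (Icc 0 1) x := by
  have : Fact (x ∈ Icc (0:ℝ) 1) := ⟨hx⟩
  exact intervalIntegral.integral_hasDerivWithinAt_right
    (intervalIntegrable_one_div_of_pos hε hpos (left_mem_Icc.2 zero_le_one) hx)
    ((hε.one_div_of_pos hpos).stronglyMeasurableAtFilter_nhdsWithin measurableSet_Icc x)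
    (hε.one_div_of_pos hpos x hx)

theorem phiInt_image_Icc (hε : ContinuousOn ε (Icc 0 1)) (hpos : ∀ x ∈ Icc (0:ℝ) 1, 0 < ε x)
    {x : ℝ} (hx : x ∈ Icc (0:ℝ) 1) : phiInt ε '' Icc 0 x = Icc 0 (phiInt ε x) := by
  have hsub : Icc 0 x ⊆ Icc (0:ℝ) 1 := Icc_subset_Icc le_rfl hx.2
  have hcont : ContinuousOn (phiInt ε) (Icc 0 x) := fun u hu =>
    (hasDerivWithinAt_phiInt hε hpos (hsub hu)).continuousWithinAt.mono hsub
  rw [hcont.image_Icc_of_monotoneOn hx.1 ((strictMonoOn_phiInt hε hpos).monotoneOn.mono hsub),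
    phiInt_zero]

-- No integrability of `g` is needed: `φ` is injective with a within-derivative everywhere.
theorem integral_comp_phiInt (hε : ContinuousOn ε (Icc 0 1))
    (hpos : ∀ x ∈ Icc (0:ℝ) 1, 0 < ε x) {x : ℝ} (hx : x ∈ Icc (0:ℝ) 1) (g : ℝ → ℝ) :
    ∫ t in (0:ℝ)..phiInt ε x, g t = ∫ u in (0:ℝ)..x, 1 / ε u * g (phiInt ε u) := by
  have hsub : Icc 0 x ⊆ Icc (0:ℝ) 1 := Icc_subset_Icc le_rfl hx.2
  rw [intervalIntegral.integral_of_le (phiInt_nonneg hε hpos hx),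
    intervalIntegral.integral_of_le hx.1, ← integral_Icc_eq_integral_Ioc,
    ← integral_Icc_eq_integral_Ioc, ← phiInt_image_Icc hε hpos hx,
    integral_image_eq_integral_abs_deriv_smul measurableSet_Icc
      (fun u hu => (hasDerivWithinAt_phiInt hε hpos (hsub hu)).mono hsub)
      ((strictMonoOn_phiInt hε hpos).injOn.mono hsub)]
  refine setIntegral_congr_fun measurableSet_Icc fun u hu => ?_
  rw [abs_of_pos (one_div_pos.2 (hpos u (hsub hu))), smul_eq_mul]

theorem monotoneOn_pow_of_rightInvOn_phiInt (hε : ContinuousOn ε (Icc 0 1))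
    (hpos : ∀ x ∈ Icc (0:ℝ) 1, 0 < ε x) {ψ : ℝ → ℝ}
    (hψ : ∀ s ∈ Icc (0:ℝ) (phiInt ε 1), ψ s ∈ Icc (0:ℝ) 1 ∧ phiInt ε (ψ s) = s) (n : ℕ) :
    MonotoneOn (fun t => ψ t ^ n) (Icc 0 (phiInt ε 1)) := by
  have hmono := (strictMonoOn_phiInt hε hpos).monotoneOn_of_rightInvOn
    (fun s hs => (hψ s hs).1) (fun s hs => (hψ s hs).2)
  exact fun a ha b hb hab => pow_le_pow_left₀ (hψ a ha).1.1 (hmono ha hb hab) n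

end phiInt

/-- Integral estimate along the first characteristic (Lemma A.3, case i = 1):
`∫₀^{φ₁(ξ)} [φ₁⁻¹(φ₁(x) − φ₁(ξ) + s)]ⁿ ds ≤ K_ε xⁿ⁺¹/(n+1)` with
`K_ε = max_{[0,1]} max(1/ε₁, 1/ε₂)`.  `ψ₁` is the inverse of `φ₁`. -/
theorem characteristic_integral_estimate_case1
    (ε₁ ε₂ : ℝ → ℝ)
    (hε₁ : ContinuousOn ε₁ (Icc 0 1)) (hε₂ : ContinuousOn ε₂ (Icc 0 1))
    (hε₁pos : ∀ x ∈ Icc (0:ℝ) 1, 0 < ε₁ x) (hε₂pos : ∀ x ∈ Icc (0:ℝ) 1, 0 < ε₂ x)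
    (ψ₁ : ℝ → ℝ)
    (hψ₁ : ∀ x ∈ Icc (0:ℝ) 1, ψ₁ (phiInt ε₁ x) = x)
    (hψ₁' : ∀ s ∈ Icc (0:ℝ) (phiInt ε₁ 1), ψ₁ s ∈ Icc (0:ℝ) 1 ∧ phiInt ε₁ (ψ₁ s) = s) :
    ∀ n : ℕ, 1 ≤ n → ∀ x ξ : ℝ, 0 ≤ ξ → ξ ≤ x → x ≤ 1 →
      (∫ s in (0:ℝ)..(phiInt ε₁ ξ), (ψ₁ (phiInt ε₁ x - phiInt ε₁ ξ + s)) ^ n) ≤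
        (⨆ y : Icc (0:ℝ) 1, max (1 / ε₁ y) (1 / ε₂ y)) * x ^ (n + 1) / (n + 1) := by
  intro n _ x ξ hξ hξx hx1
  have hx : x ∈ Icc (0:ℝ) 1 := ⟨hξ.trans hξx, hx1⟩
  have hφξ := phiInt_nonneg hε₁ hε₁pos ⟨hξ, hξx.trans hx1⟩
  have hφξx := (strictMonoOn_phiInt hε₁ hε₁pos).monotoneOn ⟨hξ, hξx.trans hx1⟩ hx hξx
  have hφx1 := (strictMonoOn_phiInt hε₁ hε₁pos).monotoneOn hx (right_mem_Icc.2 zero_le_one) hx1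
  have hψn := (monotoneOn_pow_of_rightInvOn_phiInt hε₁ hε₁pos hψ₁' n).mono
    (Icc_subset_Icc_right hφx1)
  have hK (u : ℝ) (hu : u ∈ Icc (0:ℝ) 1) :
      1 / ε₁ u ≤ ⨆ y : Icc (0:ℝ) 1, max (1 / ε₁ y) (1 / ε₂ y) :=
    (le_max_left _ _).trans
      ((ContinuousOn.sup (hε₁.one_div_of_pos hε₁pos) (hε₂.one_div_of_pos hε₂pos)).le_iSup_Icc hu)
  calc (∫ s in (0:ℝ)..(phiInt ε₁ ξ), (ψ₁ (phiInt ε₁ x - phiInt ε₁ ξ + s)) ^ n)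
      ≤ ∫ t in (0:ℝ)..phiInt ε₁ x, ψ₁ t ^ n := by
        simpa only [sub_add_cancel] using integral_comp_add_left_le_of_nonneg
          (f := fun t => ψ₁ t ^ n) (sub_nonneg.2 hφξx) hφξ
          (fun t ht => pow_nonneg (hψ₁' t ⟨ht.1.le, by linarith [ht.2]⟩).1.1 n)
          (by rw [sub_add_cancel]; exact (uIcc_of_le (hφξ.trans hφξx) ▸ hψn).intervalIntegrable)
    _ = ∫ u in (0:ℝ)..x, 1 / ε₁ u * u ^ n := by
        rw [integral_comp_phiInt hε₁ hε₁pos hx]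
        refine intervalIntegral.integral_congr fun u hu => ?_
        rw [uIcc_of_le hx.1] at hu
        simp only [hψ₁ u ⟨hu.1, hu.2.trans hx1⟩]
    _ ≤ _ := integral_mul_pow_le_of_le hx.1 ((hε₁.one_div_of_pos hε₁pos).mono
          (Icc_subset_Icc_right hx1)) (fun u hu => hK u ⟨hu.1, hu.2.trans hx1⟩) n
end

section
/- Bounds on the nonlinear functionals F₁, F₂, F₃, F₄ (Lemma B.2): There exist δ > 0 and positive constants C₅, C₆, C₇, C₈ such that for every C¹ map γ : [0,1] → ℝ² with ‖γ‖_∞ < δ and every x ∈ [0,1]: |F₁[γ](x)| ≤ C₅ (|γ(x)| + ‖γ‖_{L¹}); |F₂[γ](x)| ≤ C₆ (|γ(x)|² + ‖γ‖_{L¹}²); |F₃[γ,γ_x](x)| ≤ C₇ (‖γ‖_{L²} + |γ(x)|)(‖γ_x‖_{L²} + |γ_x(x)|); |F₄[γ](x)| ≤ C₈ (|γ(x)|² + ‖γ‖_{L²}²). -/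
open MeasureTheory Set

/-- The triangular domain T = {(x,ξ) : 0 ≤ ξ ≤ x ≤ 1}. -/
def Tri : Set (ℝ × ℝ) := {p | 0 ≤ p.2 ∧ p.2 ≤ p.1 ∧ p.1 ≤ 1}

/-- The ℓ¹ norm `|v| = |v₁| + |v₂|` on ℝ². -/
noncomputable def vnorm (v : Fin 2 → ℝ) : ℝ := |v 0| + |v 1|

/-- The matrix norm `|M| = max { |M v| : |v| = 1 }` induced by `vnorm`. -/
noncomputable def mnorm (M : Matrix (Fin 2) (Fin 2) ℝ) : ℝ :=
  sSup {r : ℝ | ∃ v : Fin 2 → ℝ, vnorm v = 1 ∧ r = vnorm (M.mulVec v)}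

/-- `‖γ‖_∞ = sup_{x ∈ [0,1]} |γ(x)|`. -/
noncomputable def supnorm (γ : ℝ → Fin 2 → ℝ) : ℝ := ⨆ x : Icc (0:ℝ) 1, vnorm (γ x)

/-- `‖γ‖_{L¹} = ∫₀¹ |γ(ξ)| dξ`. -/
noncomputable def l1norm (γ : ℝ → Fin 2 → ℝ) : ℝ := ∫ ξ in (0:ℝ)..1, vnorm (γ ξ)

/-- `‖γ‖_{L²} = (∫₀¹ |γ(ξ)|² dξ)^{1/2}`. -/
noncomputable def l2norm (γ : ℝ → Fin 2 → ℝ) : ℝ :=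
  Real.sqrt (∫ ξ in (0:ℝ)..1, (vnorm (γ ξ)) ^ 2)

/-- `𝒦[h](x) = h(x) − ∫₀ˣ K(x,ξ) h(ξ) dξ`. -/
noncomputable def opK (K : ℝ → ℝ → Matrix (Fin 2) (Fin 2) ℝ)
    (h : ℝ → Fin 2 → ℝ) (x : ℝ) : Fin 2 → ℝ :=
  h x - ∫ ξ in (0:ℝ)..x, (K x ξ).mulVec (h ξ)

/-- `ℒ[γ](x) = γ(x) + ∫₀ˣ L(x,ξ) γ(ξ) dξ`. -/
noncomputable def opL (L : ℝ → ℝ → Matrix (Fin 2) (Fin 2) ℝ)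
    (γ : ℝ → Fin 2 → ℝ) (x : ℝ) : Fin 2 → ℝ :=
  γ x + ∫ ξ in (0:ℝ)..x, (L x ξ).mulVec (γ ξ)

/-- `ℒ₁[γ](x) = L(x,x) γ(x) + ∫₀ˣ L_x(x,ξ) γ(ξ) dξ`. -/
noncomputable def opL1 (L Lx : ℝ → ℝ → Matrix (Fin 2) (Fin 2) ℝ)
    (γ : ℝ → Fin 2 → ℝ) (x : ℝ) : Fin 2 → ℝ :=
  (L x x).mulVec (γ x) + ∫ ξ in (0:ℝ)..x, (Lx x ξ).mulVec (γ ξ)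

/-- `F₁[γ](x) = Λ_NL(ℒ[γ](x), x)`. -/
noncomputable def Fone (L : ℝ → ℝ → Matrix (Fin 2) (Fin 2) ℝ)
    (Λnl : (Fin 2 → ℝ) → ℝ → Matrix (Fin 2) (Fin 2) ℝ)
    (γ : ℝ → Fin 2 → ℝ) (x : ℝ) : Matrix (Fin 2) (Fin 2) ℝ :=
  Λnl (opL L γ x) x

/-- `F₂[γ](x) = f_NL(ℒ[γ](x), x)`. -/
noncomputable def Ftwo (L : ℝ → ℝ → Matrix (Fin 2) (Fin 2) ℝ)
    (fnl : (Fin 2 → ℝ) → ℝ → (Fin 2 → ℝ))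
    (γ : ℝ → Fin 2 → ℝ) (x : ℝ) : Fin 2 → ℝ :=
  fnl (opL L γ x) x

/-- `F₃[γ,γ_x](x) = 𝒦[F₁[γ] γ_x](x)`. -/
noncomputable def Fthree (K L : ℝ → ℝ → Matrix (Fin 2) (Fin 2) ℝ)
    (Λnl : (Fin 2 → ℝ) → ℝ → Matrix (Fin 2) (Fin 2) ℝ)
    (γ γx : ℝ → Fin 2 → ℝ) (x : ℝ) : Fin 2 → ℝ :=
  opK K (fun y => (Fone L Λnl γ y).mulVec (γx y)) x

/-- `F₄[γ](x) = 𝒦[F₁[γ] ℒ₁[γ] + F₂[γ]](x)`. -/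
noncomputable def Ffour (K L Lx : ℝ → ℝ → Matrix (Fin 2) (Fin 2) ℝ)
    (Λnl : (Fin 2 → ℝ) → ℝ → Matrix (Fin 2) (Fin 2) ℝ)
    (fnl : (Fin 2 → ℝ) → ℝ → (Fin 2 → ℝ))
    (γ : ℝ → Fin 2 → ℝ) (x : ℝ) : Fin 2 → ℝ :=
  opK K (fun y => (Fone L Λnl γ y).mulVec (opL1 L Lx γ y) + Ftwo L fnl γ y) x

/-!
The Volterra operators `𝒦`, `ℒ`, `ℒ₁` have kernels bounded on the compact triangle `T`, so each
is bounded at `x` by the value of its argument at `x` plus a multiple of its `L¹` norm. When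
`‖γ‖_∞` is small, `ℒ[γ]` stays in the unit ball, where the mean value theorem makes `Λ_NL` linearly
and `f_NL` quadratically small (because `Λ_NL(0,·) = 0`, resp. `f_NL(0,·) = 0` and
`∂_γ f_NL(0,·) = 0`). Chaining these estimates and passing from `L¹` to `L²` norms by
Cauchy–Schwarz gives the four bounds.
-/

noncomputable def entrywiseNorm (M : Matrix (Fin 2) (Fin 2) ℝ) : ℝ := ∑ i, ∑ j, |M i j|

lemma entrywiseNorm_nonneg (M : Matrix (Fin 2) (Fin 2) ℝ) : 0 ≤ entrywiseNorm M := by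
  unfold entrywiseNorm; positivity

lemma vnorm_eq_norm_toLp (v : Fin 2 → ℝ) : vnorm v = ‖WithLp.toLp 1 v‖ := by
  simp [vnorm, PiLp.norm_eq_of_L1, Fin.sum_univ_two]

lemma continuous_vnorm : Continuous vnorm := by
  unfold vnorm; fun_prop

lemma vnorm_nonneg (v : Fin 2 → ℝ) : 0 ≤ vnorm v := by
  rw [vnorm_eq_norm_toLp]; exact norm_nonneg _

lemma vnorm_add_le (v w : Fin 2 → ℝ) : vnorm (v + w) ≤ vnorm v + vnorm w := by
  simpa only [vnorm_eq_norm_toLp, WithLp.toLp_add] using norm_add_le _ _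

lemma vnorm_sub_le (v w : Fin 2 → ℝ) : vnorm (v - w) ≤ vnorm v + vnorm w := by
  simpa only [vnorm_eq_norm_toLp, WithLp.toLp_sub] using norm_sub_le _ _

lemma norm_le_vnorm (v : Fin 2 → ℝ) : ‖v‖ ≤ vnorm v := by
  refine (pi_norm_le_iff_of_nonneg (vnorm_nonneg v)).2 fun i => ?_
  fin_cases i <;> simp [vnorm]

lemma vnorm_le_two_mul_norm (v : Fin 2 → ℝ) : vnorm v ≤ 2 * ‖v‖ := by
  have h0 := norm_le_pi_norm v 0
  have h1 := norm_le_pi_norm v 1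
  rw [Real.norm_eq_abs] at h0 h1
  unfold vnorm; linarith

lemma vnorm_mulVec_le (M : Matrix (Fin 2) (Fin 2) ℝ) (v : Fin 2 → ℝ) :
    vnorm (M.mulVec v) ≤ entrywiseNorm M * vnorm v := by
  have h : ∀ i, |(M.mulVec v) i| ≤ |M i 0| * |v 0| + |M i 1| * |v 1| := fun i => by
    simpa [Matrix.mulVec, dotProduct, Fin.sum_univ_two, abs_mul] using
      abs_add_le (M i 0 * v 0) (M i 1 * v 1)
  have h0 := h 0
  have h1 := h 1
  simp only [vnorm, entrywiseNorm, Fin.sum_univ_two]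
  nlinarith [abs_nonneg (v 0), abs_nonneg (v 1), abs_nonneg (M 0 0), abs_nonneg (M 0 1),
    abs_nonneg (M 1 0), abs_nonneg (M 1 1)]

lemma mnorm_le_entrywiseNorm (M : Matrix (Fin 2) (Fin 2) ℝ) : mnorm M ≤ entrywiseNorm M := by
  refine Real.sSup_le ?_ (entrywiseNorm_nonneg M)
  rintro r ⟨v, hv, rfl⟩
  simpa [hv] using vnorm_mulVec_le M v

lemma vnorm_intervalIntegral_le {f : ℝ → Fin 2 → ℝ} {a b : ℝ} (hab : a ≤ b) :
    vnorm (∫ t in a..b, f t) ≤ ∫ t in a..b, vnorm (f t) := by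
  let e := (PiLp.continuousLinearEquiv 1 ℝ fun _ : Fin 2 => ℝ).symm
  simp only [vnorm_eq_norm_toLp, intervalIntegral.integral_of_le hab]
  calc ‖e (∫ t in Ioc a b, f t)‖ = ‖∫ t in Ioc a b, e (f t)‖ := by
        rw [e.integral_comp_comm]
    _ ≤ ∫ t in Ioc a b, ‖e (f t)‖ := norm_integral_le_integral_norm _

lemma isCompact_Tri : IsCompact Tri := by
  refine (isCompact_Icc.prod isCompact_Icc :
    IsCompact (Icc (0 : ℝ) 1 ×ˢ Icc (0 : ℝ) 1)).of_isClosed_subset ?_ ?_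
  · exact (isClosed_le continuous_const continuous_snd).inter
      ((isClosed_le continuous_snd continuous_fst).inter
        (isClosed_le continuous_fst continuous_const))
  · rintro ⟨x, ξ⟩ ⟨h0, hξx, hx1⟩
    exact ⟨⟨h0.trans hξx, hx1⟩, h0, hξx.trans hx1⟩

lemma exists_entrywiseNorm_le_on_Tri {A : ℝ → ℝ → Matrix (Fin 2) (Fin 2) ℝ}
    (hA : ∀ i j, ContinuousOn (fun p : ℝ × ℝ => A p.1 p.2 i j) Tri) :
    ∃ M, ∀ p ∈ Tri, entrywiseNorm (A p.1 p.2) ≤ M := by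
  have hc : ContinuousOn (fun p : ℝ × ℝ => entrywiseNorm (A p.1 p.2)) Tri := by
    unfold entrywiseNorm
    exact continuousOn_finsetSum _ fun i _ =>
      continuousOn_finsetSum _ fun j _ => (hA i j).abs
  obtain ⟨M, hM⟩ := isCompact_Tri.exists_bound_of_continuousOn hc
  exact ⟨M, fun p hp => (le_abs_self _).trans (hM p hp)⟩

lemma nonneg_of_entrywiseNorm_le_on_Tri {A : ℝ → ℝ → Matrix (Fin 2) (Fin 2) ℝ} {M : ℝ}
    (hA : ∀ p ∈ Tri, entrywiseNorm (A p.1 p.2) ≤ M) : 0 ≤ M :=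
  (entrywiseNorm_nonneg _).trans (hA (0, 0) ⟨le_rfl, le_rfl, zero_le_one⟩)

section SliceBounds

variable {E G F : Type*} [NormedAddCommGroup E] [NormedSpace ℝ E]
  [NormedAddCommGroup G] [NormedSpace ℝ G] [NormedAddCommGroup F] [NormedSpace ℝ F]
  {g : E × G → F} {s : Set G}

lemma hasFDerivAt_slice (hg : DifferentiableOn ℝ g (univ ×ˢ s)) {x : G} (hx : x ∈ s) (u : E) :
    HasFDerivAt (fun u => g (u, x))
      ((fderivWithin ℝ g (univ ×ˢ s) (u, x)).comp (ContinuousLinearMap.inl ℝ E G)) u := by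
  rw [← hasFDerivWithinAt_univ]
  exact (hg (u, x) ⟨mem_univ _, hx⟩).hasFDerivWithinAt.comp u
    (hasFDerivAt_prodMk_left u x).hasFDerivWithinAt fun _ _ => mk_mem_prod (mem_univ _) hx

variable [ProperSpace E]

lemma exists_norm_sub_le_mul_norm (hs : IsCompact s) (hs' : UniqueDiffOn ℝ s)
    (hg : ContDiffOn ℝ 1 g (univ ×ˢ s)) (r : ℝ) :
    ∃ C > 0, ∀ u ∈ Metric.closedBall (0 : E) r, ∀ x ∈ s, ‖g (u, x) - g (0, x)‖ ≤ C * ‖u‖ := by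
  obtain ⟨C, hC⟩ := ((isCompact_closedBall (0 : E) r).prod hs).exists_bound_of_continuousOn
    ((hg.continuousOn_fderivWithin (uniqueDiffOn_univ.prod hs') le_rfl).mono
      (prod_mono (subset_univ _) subset_rfl))
  refine ⟨max C 1, by positivity, fun u hu x hx => ?_⟩
  have hmv := (convex_closedBall (0 : E) r).norm_image_sub_le_of_norm_hasFDerivWithin_le
    (f := fun u => g (u, x)) (C := max C 1)
    (fun v _ => (hasFDerivAt_slice (hg.differentiableOn one_ne_zero) hx v).hasFDerivWithinAt)
    (fun v hv => (ContinuousLinearMap.opNorm_comp_le _ _).trans <| by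
      grw [ContinuousLinearMap.norm_inl_le_one, mul_one, hC (v, x) ⟨hv, hx⟩]
      exact le_max_left _ _)
    (Metric.mem_closedBall_self (dist_nonneg.trans hu)) hu
  simpa using hmv

lemma exists_norm_le_mul_norm_sq (hs : IsCompact s) (hs' : UniqueDiffOn ℝ s)
    (hg : ContDiffOn ℝ 2 g (univ ×ˢ s)) (h0 : ∀ x ∈ s, g (0, x) = 0)
    (hd0 : ∀ x ∈ s, HasFDerivAt (fun u => g (u, x)) (0 : E →L[ℝ] F) 0) (r : ℝ) :
    ∃ C > 0, ∀ u ∈ Metric.closedBall (0 : E) r, ∀ x ∈ s, ‖g (u, x)‖ ≤ C * ‖u‖ ^ 2 := by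
  set D := fderivWithin ℝ g (univ ×ˢ s)
  have hgd : DifferentiableOn ℝ g (univ ×ˢ s) := hg.differentiableOn (by norm_num)
  obtain ⟨C, hC0, hC⟩ := exists_norm_sub_le_mul_norm hs hs'
    (hg.fderivWithin (uniqueDiffOn_univ.prod hs') (by norm_num)) r
  refine ⟨C, hC0, fun u hu x hx => ?_⟩
  have hD0 : (D (0, x)).comp (ContinuousLinearMap.inl ℝ E G) = 0 :=
    (hasFDerivAt_slice hgd hx 0).unique (hd0 x hx)
  have hur : ‖u‖ ≤ r := by simpa using hu
  -- the slice derivative vanishes at `0` and is `C`-Lipschitz, hence `≤ C ‖u‖` on the ball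
  have hmv := (convex_closedBall (0 : E) ‖u‖).norm_image_sub_le_of_norm_hasFDerivWithin_le
    (f := fun u => g (u, x)) (C := C * ‖u‖)
    (fun v _ => (hasFDerivAt_slice hgd hx v).hasFDerivWithinAt)
    (fun v hv => by
      have hvu : ‖v‖ ≤ ‖u‖ := by simpa using hv
      rw [← sub_zero ((D (v, x)).comp _), ← hD0, ← ContinuousLinearMap.sub_comp]
      calc _ ≤ ‖D (v, x) - D (0, x)‖ * ‖ContinuousLinearMap.inl ℝ E G‖ :=
            ContinuousLinearMap.opNorm_comp_le _ _
        _ ≤ C * ‖v‖ * 1 := by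
            gcongr
            · exact hC v (by simpa using hvu.trans hur) x hx
            · exact ContinuousLinearMap.norm_inl_le_one _ _ _
        _ ≤ C * ‖u‖ := by rw [mul_one]; gcongr)
    (Metric.mem_closedBall_self (norm_nonneg u)) (show u ∈ Metric.closedBall 0 ‖u‖ by simp)
  simpa [h0 x hx, sq, mul_assoc] using hmv

end SliceBounds

lemma ContDiffOn.continuousOn_of_hasDerivWithinAt {F : Type*} [NormedAddCommGroup F]
    [NormedSpace ℝ F] {f f' : ℝ → F} {s : Set ℝ} (hs : UniqueDiffOn ℝ s)
    (hf : ContDiffOn ℝ 1 f s) (hf' : ∀ x ∈ s, HasDerivWithinAt f (f' x) s x) :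
    ContinuousOn f' s :=
  (hf.continuousOn_derivWithin hs le_rfl).congr fun x hx => ((hf' x hx).derivWithin (hs x hx)).symm

lemma exists_entrywiseNorm_le_mul_vnorm {Λnl : (Fin 2 → ℝ) → ℝ → Matrix (Fin 2) (Fin 2) ℝ}
    (hΛreg : ∀ i j, ContDiffOn ℝ 2
      (fun p : (Fin 2 → ℝ) × ℝ => Λnl p.1 p.2 i j) (univ ×ˢ Icc 0 1))
    (hΛ0 : ∀ x ∈ Icc (0:ℝ) 1, Λnl 0 x = 0) :
    ∃ C > 0, ∀ w, vnorm w ≤ 1 → ∀ x ∈ Icc (0:ℝ) 1, entrywiseNorm (Λnl w x) ≤ C * vnorm w := by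
  have h := fun i j => exists_norm_sub_le_mul_norm isCompact_Icc uniqueDiffOn_Icc_zero_one
    ((hΛreg i j).of_le (by norm_num)) 1
  choose C hC0 hC using h
  refine ⟨∑ i, ∑ j, C i j, Finset.sum_pos (fun i _ =>
    Finset.sum_pos (fun j _ => hC0 i j) Finset.univ_nonempty) Finset.univ_nonempty,
    fun w hw x hx => ?_⟩
  have hw1 : w ∈ Metric.closedBall (0 : Fin 2 → ℝ) 1 := by
    simpa using (norm_le_vnorm w).trans hw
  rw [entrywiseNorm, Finset.sum_mul]
  gcongr with i _ j
  rw [Finset.sum_mul]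
  gcongr with j
  simpa [hΛ0 x hx] using (hC i j w hw1 x hx).trans
    (mul_le_mul_of_nonneg_left (norm_le_vnorm w) (hC0 i j).le)

lemma exists_vnorm_le_mul_vnorm_sq {fnl : (Fin 2 → ℝ) → ℝ → (Fin 2 → ℝ)}
    (hfreg : ∀ i, ContDiffOn ℝ 2
      (fun p : (Fin 2 → ℝ) × ℝ => fnl p.1 p.2 i) (univ ×ˢ Icc 0 1))
    (hf0 : ∀ x ∈ Icc (0:ℝ) 1, fnl 0 x = 0)
    (hdf0 : ∀ x ∈ Icc (0:ℝ) 1,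
      HasFDerivAt (fun w : Fin 2 → ℝ => fnl w x)
        (0 : (Fin 2 → ℝ) →L[ℝ] (Fin 2 → ℝ)) 0) :
    ∃ C > 0, ∀ w, vnorm w ≤ 1 → ∀ x ∈ Icc (0:ℝ) 1, vnorm (fnl w x) ≤ C * vnorm w ^ 2 := by
  obtain ⟨C, hC0, hC⟩ := exists_norm_le_mul_norm_sq (g := fun p => fnl p.1 p.2) isCompact_Icc
    uniqueDiffOn_Icc_zero_one (contDiffOn_pi.mpr hfreg) hf0 hdf0 1
  refine ⟨2 * C, by positivity, fun w hw x hx => ?_⟩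
  have hw1 : w ∈ Metric.closedBall (0 : Fin 2 → ℝ) 1 := by
    simpa using (norm_le_vnorm w).trans hw
  calc vnorm (fnl w x) ≤ 2 * ‖fnl w x‖ := vnorm_le_two_mul_norm _
    _ ≤ 2 * (C * ‖w‖ ^ 2) := by gcongr; exact hC w hw1 x hx
    _ ≤ 2 * C * vnorm w ^ 2 := by rw [← mul_assoc]; gcongr; exact norm_le_vnorm w

/-- Only the bound `b` needs to be integrable: a non-integrable integrand has integral `0`. -/
lemma vnorm_volterra_le {A : ℝ → ℝ → Matrix (Fin 2) (Fin 2) ℝ} {M : ℝ}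
    (hA : ∀ p ∈ Tri, entrywiseNorm (A p.1 p.2) ≤ M) {h : ℝ → Fin 2 → ℝ} {b : ℝ → ℝ}
    (hb : IntervalIntegrable b volume 0 1) (hhb : ∀ t ∈ Icc (0:ℝ) 1, vnorm (h t) ≤ b t)
    {x : ℝ} (hx : x ∈ Icc (0:ℝ) 1) :
    vnorm (∫ ξ in (0:ℝ)..x, (A x ξ).mulVec (h ξ)) ≤ M * ∫ t in (0:ℝ)..1, b t := by
  have hM := nonneg_of_entrywiseNorm_le_on_Tri hA
  have hMb : IntervalIntegrable (fun t => M * b t) volume 0 1 := hb.const_mul M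
  calc vnorm (∫ ξ in (0:ℝ)..x, (A x ξ).mulVec (h ξ))
      ≤ ∫ ξ in (0:ℝ)..x, vnorm ((A x ξ).mulVec (h ξ)) := vnorm_intervalIntegral_le hx.1
    _ ≤ ∫ ξ in (0:ℝ)..x, M * b ξ := by
        simp only [intervalIntegral.integral_of_le hx.1]
        refine integral_mono_of_nonneg (.of_forall fun _ => vnorm_nonneg _)
          ((hMb.mono_set (by simpa [uIcc_of_le hx.1] using Icc_subset_Icc_right hx.2)).1)
          ((ae_restrict_iff' measurableSet_Ioc).2 (.of_forall fun ξ hξ => ?_))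
        calc vnorm ((A x ξ).mulVec (h ξ)) ≤ entrywiseNorm (A x ξ) * vnorm (h ξ) :=
              vnorm_mulVec_le _ _
          _ ≤ M * b ξ := by
              gcongr
              · exact vnorm_nonneg _
              · exact hA (x, ξ) ⟨hξ.1.le, hξ.2, hx.2⟩
              · exact hhb ξ ⟨hξ.1.le, hξ.2.trans hx.2⟩
    _ ≤ ∫ t in (0:ℝ)..1, M * b t := by
        refine intervalIntegral.integral_mono_interval le_rfl hx.1 hx.2
          ((ae_restrict_iff' measurableSet_Ioc).2 (.of_forall fun t ht => ?_)) hMb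
        exact mul_nonneg hM ((vnorm_nonneg _).trans (hhb t ⟨ht.1.le, ht.2⟩))
    _ = M * ∫ t in (0:ℝ)..1, b t := intervalIntegral.integral_const_mul _ _

lemma intervalIntegrable_vnorm_comp {γ : ℝ → Fin 2 → ℝ} (hγ : ContinuousOn γ (Icc 0 1)) :
    IntervalIntegrable (fun t => vnorm (γ t)) volume 0 1 :=
  (continuous_vnorm.comp_continuousOn hγ).intervalIntegrable_of_Icc zero_le_one

lemma vnorm_opK_le {K : ℝ → ℝ → Matrix (Fin 2) (Fin 2) ℝ} {MK : ℝ}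
    (hK : ∀ p ∈ Tri, entrywiseNorm (K p.1 p.2) ≤ MK) {h : ℝ → Fin 2 → ℝ} {b : ℝ → ℝ}
    (hb : IntervalIntegrable b volume 0 1) (hhb : ∀ t ∈ Icc (0:ℝ) 1, vnorm (h t) ≤ b t)
    {x : ℝ} (hx : x ∈ Icc (0:ℝ) 1) :
    vnorm (opK K h x) ≤ b x + MK * ∫ t in (0:ℝ)..1, b t :=
  (vnorm_sub_le _ _).trans (add_le_add (hhb x hx) (vnorm_volterra_le hK hb hhb hx))

lemma vnorm_opL_le {L : ℝ → ℝ → Matrix (Fin 2) (Fin 2) ℝ} {ML : ℝ}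
    (hL : ∀ p ∈ Tri, entrywiseNorm (L p.1 p.2) ≤ ML) {γ : ℝ → Fin 2 → ℝ}
    (hγ : ContinuousOn γ (Icc 0 1)) {x : ℝ} (hx : x ∈ Icc (0:ℝ) 1) :
    vnorm (opL L γ x) ≤ vnorm (γ x) + ML * l1norm γ :=
  (vnorm_add_le _ _).trans (add_le_add le_rfl
    (vnorm_volterra_le hL (intervalIntegrable_vnorm_comp hγ) (fun _ _ => le_rfl) hx))

lemma vnorm_opL1_le {L Lx : ℝ → ℝ → Matrix (Fin 2) (Fin 2) ℝ} {ML MLx : ℝ}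
    (hL : ∀ p ∈ Tri, entrywiseNorm (L p.1 p.2) ≤ ML)
    (hLx : ∀ p ∈ Tri, entrywiseNorm (Lx p.1 p.2) ≤ MLx) {γ : ℝ → Fin 2 → ℝ}
    (hγ : ContinuousOn γ (Icc 0 1)) {x : ℝ} (hx : x ∈ Icc (0:ℝ) 1) :
    vnorm (opL1 L Lx γ x) ≤ ML * vnorm (γ x) + MLx * l1norm γ := by
  refine (vnorm_add_le _ _).trans (add_le_add ?_
    (vnorm_volterra_le hLx (intervalIntegrable_vnorm_comp hγ) (fun _ _ => le_rfl) hx))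
  exact (vnorm_mulVec_le _ _).trans <| by
    gcongr
    exacts [vnorm_nonneg _, hL (x, x) ⟨hx.1, le_rfl, hx.2⟩]

/-- Cauchy–Schwarz, from the nonpositive discriminant of `s ↦ ∫ (s f - g)²`. -/
lemma integral_mul_le_sqrt_mul_sqrt {f g : ℝ → ℝ} {a b : ℝ} (hab : a ≤ b)
    (hf : ContinuousOn f (Icc a b)) (hg : ContinuousOn g (Icc a b)) :
    ∫ t in a..b, f t * g t ≤ √(∫ t in a..b, f t ^ 2) * √(∫ t in a..b, g t ^ 2) := by
  have hff : IntervalIntegrable (fun t => f t ^ 2) volume a b :=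
    (hf.pow 2).intervalIntegrable_of_Icc hab
  have hfg : IntervalIntegrable (fun t => f t * g t) volume a b :=
    (hf.mul hg).intervalIntegrable_of_Icc hab
  have hgg : IntervalIntegrable (fun t => g t ^ 2) volume a b :=
    (hg.pow 2).intervalIntegrable_of_Icc hab
  have hquad : ∀ s : ℝ, 0 ≤ (∫ t in a..b, f t ^ 2) * (s * s)
      + (-2 * ∫ t in a..b, f t * g t) * s + ∫ t in a..b, g t ^ 2 := fun s => by
    have hexp : ∫ t in a..b, (s * f t - g t) ^ 2 = (∫ t in a..b, f t ^ 2) * (s * s)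
        + (-2 * ∫ t in a..b, f t * g t) * s + ∫ t in a..b, g t ^ 2 := by
      have hsq : (fun t => (s * f t - g t) ^ 2)
          = fun t => s ^ 2 * f t ^ 2 - 2 * s * (f t * g t) + g t ^ 2 := by
        funext t; ring
      rw [hsq, intervalIntegral.integral_add ((hff.const_mul _).sub (hfg.const_mul _)) hgg,
        intervalIntegral.integral_sub (hff.const_mul _) (hfg.const_mul _),
        intervalIntegral.integral_const_mul, intervalIntegral.integral_const_mul]
      ring
    exact hexp ▸ intervalIntegral.integral_nonneg hab fun t _ => sq_nonneg _
  have hdisc := discrim_le_zero hquad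
  rw [discrim] at hdisc
  rw [← Real.sqrt_mul (intervalIntegral.integral_nonneg hab fun t _ => sq_nonneg _)]
  exact (le_abs_self _).trans (Real.abs_le_sqrt (by linarith))

lemma l2norm_sq {γ : ℝ → Fin 2 → ℝ} : l2norm γ ^ 2 = ∫ t in (0:ℝ)..1, vnorm (γ t) ^ 2 :=
  Real.sq_sqrt (intervalIntegral.integral_nonneg zero_le_one fun _ _ => sq_nonneg _)

lemma integral_vnorm_mul_le_l2norm_mul {γ η : ℝ → Fin 2 → ℝ} (hγ : ContinuousOn γ (Icc 0 1))
    (hη : ContinuousOn η (Icc 0 1)) :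
    ∫ t in (0:ℝ)..1, vnorm (γ t) * vnorm (η t) ≤ l2norm γ * l2norm η :=
  integral_mul_le_sqrt_mul_sqrt zero_le_one (continuous_vnorm.comp_continuousOn hγ)
    (continuous_vnorm.comp_continuousOn hη)

lemma l1norm_le_l2norm {γ : ℝ → Fin 2 → ℝ} (hγ : ContinuousOn γ (Icc 0 1)) :
    l1norm γ ≤ l2norm γ := by
  simpa [l1norm, l2norm] using integral_mul_le_sqrt_mul_sqrt zero_le_one
    (continuous_vnorm.comp_continuousOn hγ) (continuousOn_const (c := (1 : ℝ)))

lemma vnorm_le_supnorm {γ : ℝ → Fin 2 → ℝ} (hγ : ContinuousOn γ (Icc 0 1)) {x : ℝ}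
    (hx : x ∈ Icc (0:ℝ) 1) : vnorm (γ x) ≤ supnorm γ :=
  le_ciSup (isCompact_range ((continuous_vnorm.comp_continuousOn hγ).domRestrict)).bddAbove
    (⟨x, hx⟩ : Icc (0:ℝ) 1)

lemma l1norm_le_supnorm {γ : ℝ → Fin 2 → ℝ} (hγ : ContinuousOn γ (Icc 0 1)) :
    l1norm γ ≤ supnorm γ := by
  simpa [l1norm] using intervalIntegral.integral_mono_on zero_le_one
    (intervalIntegrable_vnorm_comp hγ) intervalIntegrable_const fun t ht => vnorm_le_supnorm hγ ht

lemma l1norm_nonneg (γ : ℝ → Fin 2 → ℝ) : 0 ≤ l1norm γ :=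
  intervalIntegral.integral_nonneg zero_le_one fun _ _ => vnorm_nonneg _

lemma add_mul_le_one_add_mul_add {v a m : ℝ} (hv : 0 ≤ v) (ha : 0 ≤ a) (hm : 0 ≤ m) :
    v + m * a ≤ (1 + m) * (v + a) := by
  nlinarith [mul_nonneg hm hv]

section PointwiseBounds

variable {K L Lx : ℝ → ℝ → Matrix (Fin 2) (Fin 2) ℝ}
  {Λnl : (Fin 2 → ℝ) → ℝ → Matrix (Fin 2) (Fin 2) ℝ} {fnl : (Fin 2 → ℝ) → ℝ → (Fin 2 → ℝ)}
  {γ γx : ℝ → Fin 2 → ℝ} {MK ML MLx CΛ Cf : ℝ}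

lemma vnorm_opL_le_one (hL : ∀ p ∈ Tri, entrywiseNorm (L p.1 p.2) ≤ ML)
    (hγ : ContinuousOn γ (Icc 0 1)) (hsup : supnorm γ < 1 / (1 + ML)) :
    ∀ t ∈ Icc (0:ℝ) 1, vnorm (opL L γ t) ≤ 1 := fun t ht => by
  have hML := nonneg_of_entrywiseNorm_le_on_Tri hL
  calc vnorm (opL L γ t) ≤ vnorm (γ t) + ML * l1norm γ := vnorm_opL_le hL hγ ht
    _ ≤ (1 + ML) * supnorm γ := by
        nlinarith [vnorm_le_supnorm hγ ht, l1norm_le_supnorm hγ]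
    _ ≤ 1 := by
        rw [lt_div_iff₀ (by positivity)] at hsup
        linarith

lemma entrywiseNorm_Fone_le (hL : ∀ p ∈ Tri, entrywiseNorm (L p.1 p.2) ≤ ML)
    (hΛ : ∀ w, vnorm w ≤ 1 → ∀ t ∈ Icc (0:ℝ) 1, entrywiseNorm (Λnl w t) ≤ CΛ * vnorm w)
    (hCΛ : 0 ≤ CΛ) (hγ : ContinuousOn γ (Icc 0 1))
    (hsmall : ∀ t ∈ Icc (0:ℝ) 1, vnorm (opL L γ t) ≤ 1) {x : ℝ} (hx : x ∈ Icc (0:ℝ) 1) :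
    entrywiseNorm (Fone L Λnl γ x) ≤ CΛ * (vnorm (γ x) + ML * l1norm γ) :=
  (hΛ _ (hsmall x hx) x hx).trans (mul_le_mul_of_nonneg_left (vnorm_opL_le hL hγ hx) hCΛ)

lemma vnorm_Ftwo_le_sq (hL : ∀ p ∈ Tri, entrywiseNorm (L p.1 p.2) ≤ ML)
    (hf : ∀ w, vnorm w ≤ 1 → ∀ t ∈ Icc (0:ℝ) 1, vnorm (fnl w t) ≤ Cf * vnorm w ^ 2)
    (hCf : 0 ≤ Cf) (hγ : ContinuousOn γ (Icc 0 1))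
    (hsmall : ∀ t ∈ Icc (0:ℝ) 1, vnorm (opL L γ t) ≤ 1) {x : ℝ} (hx : x ∈ Icc (0:ℝ) 1) :
    vnorm (Ftwo L fnl γ x) ≤ Cf * (vnorm (γ x) + ML * l1norm γ) ^ 2 :=
  (hf _ (hsmall x hx) x hx).trans <| by
    gcongr
    exacts [vnorm_nonneg _, vnorm_opL_le hL hγ hx]

lemma mnorm_Fone_le (hL : ∀ p ∈ Tri, entrywiseNorm (L p.1 p.2) ≤ ML)
    (hΛ : ∀ w, vnorm w ≤ 1 → ∀ t ∈ Icc (0:ℝ) 1, entrywiseNorm (Λnl w t) ≤ CΛ * vnorm w)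
    (hCΛ : 0 ≤ CΛ) (hγ : ContinuousOn γ (Icc 0 1))
    (hsmall : ∀ t ∈ Icc (0:ℝ) 1, vnorm (opL L γ t) ≤ 1) {x : ℝ} (hx : x ∈ Icc (0:ℝ) 1) :
    mnorm (Fone L Λnl γ x) ≤ CΛ * (1 + ML) * (vnorm (γ x) + l1norm γ) :=
  calc mnorm (Fone L Λnl γ x) ≤ entrywiseNorm (Fone L Λnl γ x) := mnorm_le_entrywiseNorm _
    _ ≤ CΛ * (vnorm (γ x) + ML * l1norm γ) := entrywiseNorm_Fone_le hL hΛ hCΛ hγ hsmall hx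
    _ ≤ CΛ * (1 + ML) * (vnorm (γ x) + l1norm γ) := by
        rw [mul_assoc]
        gcongr
        exact add_mul_le_one_add_mul_add (vnorm_nonneg _) (l1norm_nonneg γ)
          (nonneg_of_entrywiseNorm_le_on_Tri hL)

lemma vnorm_Ftwo_le (hL : ∀ p ∈ Tri, entrywiseNorm (L p.1 p.2) ≤ ML)
    (hf : ∀ w, vnorm w ≤ 1 → ∀ t ∈ Icc (0:ℝ) 1, vnorm (fnl w t) ≤ Cf * vnorm w ^ 2)
    (hCf : 0 ≤ Cf) (hγ : ContinuousOn γ (Icc 0 1))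
    (hsmall : ∀ t ∈ Icc (0:ℝ) 1, vnorm (opL L γ t) ≤ 1) {x : ℝ} (hx : x ∈ Icc (0:ℝ) 1) :
    vnorm (Ftwo L fnl γ x) ≤ 2 * Cf * (1 + ML) ^ 2 * (vnorm (γ x) ^ 2 + l1norm γ ^ 2) := by
  have hv := vnorm_nonneg (γ x)
  have ha := l1norm_nonneg γ
  calc vnorm (Ftwo L fnl γ x) ≤ Cf * (vnorm (γ x) + ML * l1norm γ) ^ 2 :=
        vnorm_Ftwo_le_sq hL hf hCf hγ hsmall hx
    _ ≤ Cf * ((1 + ML) * (vnorm (γ x) + l1norm γ)) ^ 2 := by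
        gcongr
        · nlinarith [nonneg_of_entrywiseNorm_le_on_Tri hL]
        · exact add_mul_le_one_add_mul_add hv ha (nonneg_of_entrywiseNorm_le_on_Tri hL)
    _ = Cf * (1 + ML) ^ 2 * (vnorm (γ x) + l1norm γ) ^ 2 := by ring
    _ ≤ Cf * (1 + ML) ^ 2 * (2 * (vnorm (γ x) ^ 2 + l1norm γ ^ 2)) := by gcongr; exact add_sq_le
    _ = 2 * Cf * (1 + ML) ^ 2 * (vnorm (γ x) ^ 2 + l1norm γ ^ 2) := by ring

lemma vnorm_Fthree_le (hK : ∀ p ∈ Tri, entrywiseNorm (K p.1 p.2) ≤ MK)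
    (hL : ∀ p ∈ Tri, entrywiseNorm (L p.1 p.2) ≤ ML)
    (hΛ : ∀ w, vnorm w ≤ 1 → ∀ t ∈ Icc (0:ℝ) 1, entrywiseNorm (Λnl w t) ≤ CΛ * vnorm w)
    (hCΛ : 0 ≤ CΛ) (hγ : ContinuousOn γ (Icc 0 1)) (hγx : ContinuousOn γx (Icc 0 1))
    (hsmall : ∀ t ∈ Icc (0:ℝ) 1, vnorm (opL L γ t) ≤ 1) {x : ℝ} (hx : x ∈ Icc (0:ℝ) 1) :
    vnorm (Fthree K L Λnl γ γx x) ≤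
      CΛ * (1 + ML) * (1 + 2 * MK) * (l2norm γ + vnorm (γ x)) * (l2norm γx + vnorm (γx x)) := by
  set c := CΛ * (1 + ML)
  set p := l2norm γ
  set q := l2norm γx
  have hML := nonneg_of_entrywiseNorm_le_on_Tri hL
  have hMK := nonneg_of_entrywiseNorm_le_on_Tri hK
  have hp : 0 ≤ p := Real.sqrt_nonneg _
  have hq : 0 ≤ q := Real.sqrt_nonneg _
  have hc : 0 ≤ c := by positivity
  have hcp : 0 ≤ c * p := by positivity
  have hb : ∀ t ∈ Icc (0:ℝ) 1, vnorm ((Fone L Λnl γ t).mulVec (γx t))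
      ≤ c * (vnorm (γ t) * vnorm (γx t)) + c * p * vnorm (γx t) := fun t ht => by
    have hLγ : vnorm (γ t) + ML * l1norm γ ≤ (1 + ML) * (vnorm (γ t) + p) :=
      calc _ ≤ vnorm (γ t) + ML * p := by gcongr; exact l1norm_le_l2norm hγ
        _ ≤ _ := add_mul_le_one_add_mul_add (vnorm_nonneg _) hp hML
    calc _ ≤ entrywiseNorm (Fone L Λnl γ t) * vnorm (γx t) := vnorm_mulVec_le _ _
      _ ≤ CΛ * ((1 + ML) * (vnorm (γ t) + p)) * vnorm (γx t) :=
          mul_le_mul_of_nonneg_right ((entrywiseNorm_Fone_le hL hΛ hCΛ hγ hsmall ht).trans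
            (mul_le_mul_of_nonneg_left hLγ hCΛ)) (vnorm_nonneg _)
      _ = c * (vnorm (γ t) * vnorm (γx t)) + c * p * vnorm (γx t) := by ring
  have hvvx : IntervalIntegrable (fun t => vnorm (γ t) * vnorm (γx t)) volume 0 1 :=
    ((continuous_vnorm.comp_continuousOn hγ).mul
      (continuous_vnorm.comp_continuousOn hγx)).intervalIntegrable_of_Icc zero_le_one
  have hvx := intervalIntegrable_vnorm_comp hγx
  have hint : ∫ t in (0:ℝ)..1, (c * (vnorm (γ t) * vnorm (γx t)) + c * p * vnorm (γx t))
      = c * (∫ t in (0:ℝ)..1, vnorm (γ t) * vnorm (γx t)) + c * p * l1norm γx := by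
    rw [intervalIntegral.integral_add (hvvx.const_mul _) (hvx.const_mul _),
      intervalIntegral.integral_const_mul, intervalIntegral.integral_const_mul, l1norm]
  have hP : vnorm (γ x) * vnorm (γx x) + p * vnorm (γx x)
      ≤ (p + vnorm (γ x)) * (q + vnorm (γx x)) := by
    nlinarith [mul_nonneg hp hq, mul_nonneg (vnorm_nonneg (γ x)) hq]
  have hpq : p * q ≤ (p + vnorm (γ x)) * (q + vnorm (γx x)) := by
    nlinarith [mul_nonneg hp (vnorm_nonneg (γx x)), mul_nonneg (vnorm_nonneg (γ x)) hq,
      mul_nonneg (vnorm_nonneg (γ x)) (vnorm_nonneg (γx x))]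
  calc vnorm (Fthree K L Λnl γ γx x)
      ≤ c * (vnorm (γ x) * vnorm (γx x)) + c * p * vnorm (γx x)
        + MK * (c * (∫ t in (0:ℝ)..1, vnorm (γ t) * vnorm (γx t)) + c * p * l1norm γx) :=
        hint ▸ vnorm_opK_le hK ((hvvx.const_mul _).add (hvx.const_mul _)) hb hx
    _ ≤ c * (vnorm (γ x) * vnorm (γx x)) + c * p * vnorm (γx x)
        + MK * (c * (p * q) + c * p * q) := by
        gcongr
        exacts [integral_vnorm_mul_le_l2norm_mul hγ hγx, l1norm_le_l2norm hγx]
    _ = c * (vnorm (γ x) * vnorm (γx x) + p * vnorm (γx x) + 2 * MK * (p * q)) := by ring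
    _ ≤ c * ((p + vnorm (γ x)) * (q + vnorm (γx x))
        + 2 * MK * ((p + vnorm (γ x)) * (q + vnorm (γx x)))) := by gcongr
    _ = c * (1 + 2 * MK) * (p + vnorm (γ x)) * (q + vnorm (γx x)) := by ring

lemma vnorm_Ffour_integrand_le (hL : ∀ p ∈ Tri, entrywiseNorm (L p.1 p.2) ≤ ML)
    (hLx : ∀ p ∈ Tri, entrywiseNorm (Lx p.1 p.2) ≤ MLx)
    (hΛ : ∀ w, vnorm w ≤ 1 → ∀ t ∈ Icc (0:ℝ) 1, entrywiseNorm (Λnl w t) ≤ CΛ * vnorm w)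
    (hCΛ : 0 ≤ CΛ)
    (hf : ∀ w, vnorm w ≤ 1 → ∀ t ∈ Icc (0:ℝ) 1, vnorm (fnl w t) ≤ Cf * vnorm w ^ 2)
    (hCf : 0 ≤ Cf) (hγ : ContinuousOn γ (Icc 0 1))
    (hsmall : ∀ t ∈ Icc (0:ℝ) 1, vnorm (opL L γ t) ≤ 1) {x : ℝ} (hx : x ∈ Icc (0:ℝ) 1) :
    vnorm ((Fone L Λnl γ x).mulVec (opL1 L Lx γ x) + Ftwo L fnl γ x) ≤
      2 * (CΛ + Cf) * (1 + ML + MLx) ^ 2 * (vnorm (γ x) ^ 2 + l2norm γ ^ 2) := by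
  set v := vnorm (γ x)
  set a := l1norm γ
  set s := 1 + ML + MLx
  have hv : 0 ≤ v := vnorm_nonneg _
  have ha : 0 ≤ a := l1norm_nonneg γ
  have hML := nonneg_of_entrywiseNorm_le_on_Tri hL
  have hMLx := nonneg_of_entrywiseNorm_le_on_Tri hLx
  have hw : v + ML * a ≤ s * (v + a) := by
    nlinarith [mul_nonneg hML hv, mul_nonneg hMLx hv, mul_nonneg hMLx ha]
  have hw1 : ML * v + MLx * a ≤ s * (v + a) := by
    nlinarith [mul_nonneg hML ha, mul_nonneg hMLx hv, mul_nonneg hML hv]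
  calc _ ≤ entrywiseNorm (Fone L Λnl γ x) * vnorm (opL1 L Lx γ x) + vnorm (Ftwo L fnl γ x) :=
        (vnorm_add_le _ _).trans (add_le_add (vnorm_mulVec_le _ _) le_rfl)
    _ ≤ CΛ * (v + ML * a) * (ML * v + MLx * a) + Cf * (v + ML * a) ^ 2 :=
        add_le_add (mul_le_mul (entrywiseNorm_Fone_le hL hΛ hCΛ hγ hsmall hx)
          (vnorm_opL1_le hL hLx hγ hx) (vnorm_nonneg _) (by positivity))
          (vnorm_Ftwo_le_sq hL hf hCf hγ hsmall hx)
    _ ≤ CΛ * (s * (v + a)) * (s * (v + a)) + Cf * (s * (v + a)) ^ 2 := by gcongr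
    _ = (CΛ + Cf) * s ^ 2 * (v + a) ^ 2 := by ring
    _ ≤ (CΛ + Cf) * s ^ 2 * (2 * (v ^ 2 + l2norm γ ^ 2)) := by
        gcongr
        exact add_sq_le.trans (by gcongr; exact l1norm_le_l2norm hγ)
    _ = 2 * (CΛ + Cf) * s ^ 2 * (v ^ 2 + l2norm γ ^ 2) := by ring

lemma vnorm_Ffour_le (hK : ∀ p ∈ Tri, entrywiseNorm (K p.1 p.2) ≤ MK)
    (hL : ∀ p ∈ Tri, entrywiseNorm (L p.1 p.2) ≤ ML)
    (hLx : ∀ p ∈ Tri, entrywiseNorm (Lx p.1 p.2) ≤ MLx)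
    (hΛ : ∀ w, vnorm w ≤ 1 → ∀ t ∈ Icc (0:ℝ) 1, entrywiseNorm (Λnl w t) ≤ CΛ * vnorm w)
    (hCΛ : 0 ≤ CΛ)
    (hf : ∀ w, vnorm w ≤ 1 → ∀ t ∈ Icc (0:ℝ) 1, vnorm (fnl w t) ≤ Cf * vnorm w ^ 2)
    (hCf : 0 ≤ Cf) (hγ : ContinuousOn γ (Icc 0 1))
    (hsmall : ∀ t ∈ Icc (0:ℝ) 1, vnorm (opL L γ t) ≤ 1) {x : ℝ} (hx : x ∈ Icc (0:ℝ) 1) :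
    vnorm (Ffour K L Lx Λnl fnl γ x) ≤
      2 * (CΛ + Cf) * (1 + ML + MLx) ^ 2 * (1 + 2 * MK) * (vnorm (γ x) ^ 2 + l2norm γ ^ 2) := by
  set c := 2 * (CΛ + Cf) * (1 + ML + MLx) ^ 2
  set p := l2norm γ
  have hMK := nonneg_of_entrywiseNorm_le_on_Tri hK
  have hc : 0 ≤ c := by positivity
  have hvv : IntervalIntegrable (fun t => vnorm (γ t) ^ 2) volume 0 1 :=
    ((continuous_vnorm.comp_continuousOn hγ).pow 2).intervalIntegrable_of_Icc zero_le_one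
  have hint : ∫ t in (0:ℝ)..1, c * (vnorm (γ t) ^ 2 + p ^ 2) = 2 * c * p ^ 2 := by
    rw [intervalIntegral.integral_const_mul, intervalIntegral.integral_add hvv
      intervalIntegrable_const, ← l2norm_sq]
    simp only [intervalIntegral.integral_const, sub_zero, one_smul]
    ring
  calc vnorm (Ffour K L Lx Λnl fnl γ x)
      ≤ c * (vnorm (γ x) ^ 2 + p ^ 2) + MK * (2 * c * p ^ 2) :=
        hint ▸ vnorm_opK_le hK ((hvv.add intervalIntegrable_const).const_mul c)
          (fun t ht => vnorm_Ffour_integrand_le hL hLx hΛ hCΛ hf hCf hγ hsmall ht) hx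
    _ ≤ c * (vnorm (γ x) ^ 2 + p ^ 2) + MK * (2 * c * (vnorm (γ x) ^ 2 + p ^ 2)) := by
        gcongr
        nlinarith [sq_nonneg (vnorm (γ x))]
    _ = c * (1 + 2 * MK) * (vnorm (γ x) ^ 2 + p ^ 2) := by ring

end PointwiseBounds

theorem nonlinear_functional_bounds_general
    (K L Lx : ℝ → ℝ → Matrix (Fin 2) (Fin 2) ℝ)
    (hK : ∀ i j, ContinuousOn (fun p : ℝ × ℝ => K p.1 p.2 i j) Tri)
    (hL : ∀ i j, ContinuousOn (fun p : ℝ × ℝ => L p.1 p.2 i j) Tri)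
    (hLxc : ∀ i j, ContinuousOn (fun p : ℝ × ℝ => Lx p.1 p.2 i j) Tri)
    (Λnl : (Fin 2 → ℝ) → ℝ → Matrix (Fin 2) (Fin 2) ℝ)
    (hΛreg : ∀ i j, ContDiffOn ℝ 2
      (fun p : (Fin 2 → ℝ) × ℝ => Λnl p.1 p.2 i j) (univ ×ˢ Icc 0 1))
    (hΛ0 : ∀ x ∈ Icc (0:ℝ) 1, Λnl 0 x = 0)
    (fnl : (Fin 2 → ℝ) → ℝ → (Fin 2 → ℝ))
    (hfreg : ∀ i, ContDiffOn ℝ 2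
      (fun p : (Fin 2 → ℝ) × ℝ => fnl p.1 p.2 i) (univ ×ˢ Icc 0 1))
    (hf0 : ∀ x ∈ Icc (0:ℝ) 1, fnl 0 x = 0)
    (hdf0 : ∀ x ∈ Icc (0:ℝ) 1,
      HasFDerivAt (fun w : Fin 2 → ℝ => fnl w x)
        (0 : (Fin 2 → ℝ) →L[ℝ] (Fin 2 → ℝ)) 0) :
    ∃ δ > (0:ℝ), ∃ C₅ > (0:ℝ), ∃ C₆ > (0:ℝ), ∃ C₇ > (0:ℝ), ∃ C₈ > (0:ℝ),
      ∀ γ γx : ℝ → Fin 2 → ℝ,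
        ContDiffOn ℝ 1 γ (Icc 0 1) →
        (∀ x ∈ Icc (0:ℝ) 1, HasDerivWithinAt γ (γx x) (Icc 0 1) x) →
        supnorm γ < δ →
        ∀ x ∈ Icc (0:ℝ) 1,
          mnorm (Fone L Λnl γ x) ≤ C₅ * (vnorm (γ x) + l1norm γ) ∧
          vnorm (Ftwo L fnl γ x) ≤ C₆ * ((vnorm (γ x)) ^ 2 + (l1norm γ) ^ 2) ∧
          vnorm (Fthree K L Λnl γ γx x) ≤
            C₇ * (l2norm γ + vnorm (γ x)) * (l2norm γx + vnorm (γx x)) ∧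
          vnorm (Ffour K L Lx Λnl fnl γ x) ≤
            C₈ * ((vnorm (γ x)) ^ 2 + (l2norm γ) ^ 2) := by
  obtain ⟨MK, hMK⟩ := exists_entrywiseNorm_le_on_Tri hK
  obtain ⟨ML, hML⟩ := exists_entrywiseNorm_le_on_Tri hL
  obtain ⟨MLx, hMLx⟩ := exists_entrywiseNorm_le_on_Tri hLxc
  obtain ⟨CΛ, hCΛ0, hCΛ⟩ := exists_entrywiseNorm_le_mul_vnorm hΛreg hΛ0
  obtain ⟨Cf, hCf0, hCf⟩ := exists_vnorm_le_mul_vnorm_sq hfreg hf0 hdf0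
  have hMK0 := nonneg_of_entrywiseNorm_le_on_Tri hMK
  have hML0 := nonneg_of_entrywiseNorm_le_on_Tri hML
  have hMLx0 := nonneg_of_entrywiseNorm_le_on_Tri hMLx
  refine ⟨1 / (1 + ML), by positivity, CΛ * (1 + ML), by positivity,
    2 * Cf * (1 + ML) ^ 2, by positivity, CΛ * (1 + ML) * (1 + 2 * MK), by positivity,
    2 * (CΛ + Cf) * (1 + ML + MLx) ^ 2 * (1 + 2 * MK), by positivity,
    fun γ γx hγ hγx hsup x hx => ?_⟩
  have hγc := hγ.continuousOn
  have hγxc := hγ.continuousOn_of_hasDerivWithinAt uniqueDiffOn_Icc_zero_one hγx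
  have hsmall := vnorm_opL_le_one hML hγc hsup
  exact ⟨mnorm_Fone_le hML hCΛ hCΛ0.le hγc hsmall hx,
    vnorm_Ftwo_le hML hCf hCf0.le hγc hsmall hx,
    vnorm_Fthree_le hMK hML hCΛ hCΛ0.le hγc hγxc hsmall hx,
    vnorm_Ffour_le hMK hML hMLx hCΛ hCΛ0.le hCf hCf0.le hγc hsmall hx⟩

/-- Bounds on the nonlinear functionals F₁, F₂, F₃, F₄ (Lemma B.2). -/
theorem nonlinear_functional_bounds
    (K L Lx : ℝ → ℝ → Matrix (Fin 2) (Fin 2) ℝ)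
    (hK : ∀ i j, ContinuousOn (fun p : ℝ × ℝ => K p.1 p.2 i j) Tri)
    (hL : ∀ i j, ContinuousOn (fun p : ℝ × ℝ => L p.1 p.2 i j) Tri)
    (hLx : ∀ x ξ : ℝ, 0 ≤ ξ → ξ ≤ x → x ≤ 1 → ∀ i j,
      HasDerivWithinAt (fun s => L s ξ i j) (Lx x ξ i j) (Icc ξ 1) x)
    (hLxc : ∀ i j, ContinuousOn (fun p : ℝ × ℝ => Lx p.1 p.2 i j) Tri)
    (Λnl : (Fin 2 → ℝ) → ℝ → Matrix (Fin 2) (Fin 2) ℝ)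
    (hΛreg : ∀ i j, ContDiffOn ℝ 2
      (fun p : (Fin 2 → ℝ) × ℝ => Λnl p.1 p.2 i j) (univ ×ˢ Icc 0 1))
    (hΛ0 : ∀ x ∈ Icc (0:ℝ) 1, Λnl 0 x = 0)
    (fnl : (Fin 2 → ℝ) → ℝ → (Fin 2 → ℝ))
    (hfreg : ∀ i, ContDiffOn ℝ 2
      (fun p : (Fin 2 → ℝ) × ℝ => fnl p.1 p.2 i) (univ ×ˢ Icc 0 1))
    (hf0 : ∀ x ∈ Icc (0:ℝ) 1, fnl 0 x = 0)
    (hdf0 : ∀ x ∈ Icc (0:ℝ) 1,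
      HasFDerivAt (fun w : Fin 2 → ℝ => fnl w x)
        (0 : (Fin 2 → ℝ) →L[ℝ] (Fin 2 → ℝ)) 0) :
    ∃ δ > (0:ℝ), ∃ C₅ > (0:ℝ), ∃ C₆ > (0:ℝ), ∃ C₇ > (0:ℝ), ∃ C₈ > (0:ℝ),
      ∀ γ γx : ℝ → Fin 2 → ℝ,
        ContDiffOn ℝ 1 γ (Icc 0 1) →
        (∀ x ∈ Icc (0:ℝ) 1, HasDerivWithinAt γ (γx x) (Icc 0 1) x) →
        supnorm γ < δ →
        ∀ x ∈ Icc (0:ℝ) 1,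
          mnorm (Fone L Λnl γ x) ≤ C₅ * (vnorm (γ x) + l1norm γ) ∧
          vnorm (Ftwo L fnl γ x) ≤ C₆ * ((vnorm (γ x)) ^ 2 + (l1norm γ) ^ 2) ∧
          vnorm (Fthree K L Λnl γ γx x) ≤
            C₇ * (l2norm γ + vnorm (γ x)) * (l2norm γx + vnorm (γx x)) ∧
          vnorm (Ffour K L Lx Λnl fnl γ x) ≤
            C₈ * ((vnorm (γ x)) ^ 2 + (l2norm γ) ^ 2) :=
  nonlinear_functional_bounds_general K L Lx hK hL hLxc Λnl hΛreg hΛ0 fnl hfreg hf0 hdf0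
end
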